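/- arXiv:math/0609261 — 8 statements merged into one kernel-verified Lean document; each statement's English description precedes it below -/
import Mathlib

section
/- A Banach space B over ℂ is separable if and only if there exists a function φ in C(ℝ, B) that is not mean periodic, i.e., such that the closed linear span of the translates of φ is all of C(ℝ, B). -/
/-!
If `B` is separable, so is `C(ℝ, B)`; pick a dense sequence `(g k)` in it and glue copies of the
`g k` along `ℝ` with cut-off plateaus, so that every `g k` appears on arbitrarily long windows.
Translating such a window back to the origin approximates `g k` uniformly on compacts, hence the
translates of the glued function are already dense. Conversely, evaluation at `0` maps the
translates of `φ` into the span of the separable set `φ '' ℝ`; since the constants lie in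
`C(ℝ, B) = τ(φ)`, all of `B` lies in the closure of that span.
-/

open Topology

/-- The translateBy of a continuous function `φ : ℝ → B` by `t`, i.e. `s ↦ φ (s + t)`. -/
noncomputable def translateBy {B : Type*} [NormedAddCommGroup B] [NormedSpace ℂ B]
    (φ : C(ℝ, B)) (t : ℝ) : C(ℝ, B) :=
  φ.comp ⟨fun s => s + t, by continuity⟩

/-- `tau φ` is the closure in `C(ℝ, B)` (compact-open topology) of the linear span of
all translateBys of `φ`. -/
noncomputable def tau {B : Type*} [NormedAddCommGroup B] [NormedSpace ℂ B]
    (φ : C(ℝ, B)) : Set C(ℝ, B) :=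
  closure (Submodule.span ℂ (Set.range (translateBy φ)) : Set C(ℝ, B))

open Filter Set

theorem locallyFinite_of_subset_Ioi {ι X : Type*} [TopologicalSpace X] [LinearOrder X]
    [OrderTopology X] [NoMaxOrder X] {f : ι → Set X} {l : ι → X}
    (hl : Tendsto l cofinite atTop) (hf : ∀ i, f i ⊆ Ioi (l i)) : LocallyFinite f := by
  intro x
  obtain ⟨y, hxy⟩ := exists_gt x
  refine ⟨Iio y, Iio_mem_nhds hxy, ?_⟩
  have : ∀ᶠ i in cofinite, ¬(f i ∩ Iio y).Nonempty := (hl.eventually_ge_atTop y).mono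
    fun i hi ⟨z, hzi, hzy⟩ => (hi.trans_lt (hf i hzi)).not_gt hzy
  exact (eventually_cofinite.1 this).subset fun _ hi => not_not_intro hi

theorem ContinuousMap.tendsto_of_eventually_eqOn {α X Y : Type*} [TopologicalSpace X]
    [TopologicalSpace Y] {l : Filter α} {f : α → C(X, Y)} {g : C(X, Y)}
    (h : ∀ K, IsCompact K → ∀ᶠ a in l, EqOn (f a) g K) : Tendsto f l (𝓝 g) :=
  tendsto_nhds_compactOpen.2 fun K hK _ _ hgKU =>
    (h K hK).mono fun _ hfg => hgKU.congr hfg.symm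

namespace PlateauGlue

/-- The plateaus sit at these centres, far enough apart that the `m`-th plateau, of half-width
`m + 1`, meets no other one on `[center m - m, center m + m]`. -/
noncomputable def center (m : ℕ) : ℝ := (m : ℝ) ^ 2 + 3 * m

noncomputable def plateau (m : ℕ) (s : ℝ) : ℝ :=
  max 0 (min 1 ((m : ℝ) + 1 - |s - center m|))

theorem continuous_plateau (m : ℕ) : Continuous (plateau m) := by
  unfold plateau; fun_prop

theorem plateau_eq_zero {m : ℕ} {s : ℝ} (h : (m : ℝ) + 1 ≤ |s - center m|) :
    plateau m s = 0 :=
  max_eq_left <| (min_le_right _ _).trans (by linarith)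

theorem plateau_add_center_self {m : ℕ} {s : ℝ} (hs : |s| ≤ m) :
    plateau m (s + center m) = 1 := by
  rw [plateau, add_sub_cancel_right, min_eq_left (by linarith), max_eq_right zero_le_one]

theorem plateau_add_center_of_ne {m m' : ℕ} (hne : m' ≠ m) {s : ℝ} (hs : |s| ≤ m) :
    plateau m' (s + center m) = 0 := by
  apply plateau_eq_zero
  obtain ⟨hs₁, hs₂⟩ := abs_le.1 hs
  have hm : (0 : ℝ) ≤ m := m.cast_nonneg
  have hm' : (0 : ℝ) ≤ m' := m'.cast_nonneg
  rcases hne.lt_or_gt with h | h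
  · have h : (m' : ℝ) + 1 ≤ m := by exact_mod_cast h
    refine le_trans ?_ (le_abs_self _)
    unfold center; nlinarith
  · have h : (m : ℝ) + 1 ≤ m' := by exact_mod_cast h
    refine le_trans ?_ (neg_le_abs _)
    unfold center; nlinarith

theorem support_plateau_subset (m : ℕ) :
    Function.support (plateau m) ⊆ Ioi (center m - (m + 1)) := fun s hs => by
  by_contra hs'
  refine hs (plateau_eq_zero ?_)
  rw [abs_sub_comm]
  exact le_abs.2 (Or.inl (by simp only [mem_Ioi, not_lt] at hs'; linarith))

theorem tendsto_center_sub : Tendsto (fun m : ℕ => center m - (m + 1)) cofinite atTop := by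
  rw [Nat.cofinite_eq_atTop]
  refine tendsto_atTop_mono (fun m => ?_)
    (tendsto_atTop_add_const_right _ (-1) tendsto_natCast_atTop_atTop)
  have hm : (0 : ℝ) ≤ m := m.cast_nonneg
  unfold center; nlinarith

variable {E : Type*} [TopologicalSpace E] [AddCommMonoid E] [ContinuousAdd E] [Module ℝ E]
  [ContinuousSMul ℝ E]

noncomputable def glue (d : ℕ → C(ℝ, E)) : C(ℝ, E) where
  toFun s := ∑ᶠ m, plateau m s • d m (s - center m)
  continuous_toFun := by
    refine continuous_finsum (fun m => (continuous_plateau m).smul (by fun_prop))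
      (locallyFinite_of_subset_Ioi tendsto_center_sub fun m => ?_)
    exact (Function.support_smul_subset_left _ _).trans (support_plateau_subset m)

theorem glue_add_center (d : ℕ → C(ℝ, E)) {m : ℕ} {s : ℝ} (hs : |s| ≤ m) :
    glue d (s + center m) = d m s := by
  change ∑ᶠ m', _ = _
  rw [finsum_eq_single _ m fun m' hm' => by rw [plateau_add_center_of_ne hm' hs, zero_smul],
    plateau_add_center_self hs, one_smul, add_sub_cancel_right]

end PlateauGlue

theorem ContinuousMap.exists_add_eq_of_abs_le {E : Type*} [TopologicalSpace E] [AddCommMonoid E]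
    [ContinuousAdd E] [Module ℝ E] [ContinuousSMul ℝ E] (d : ℕ → C(ℝ, E)) :
    ∃ φ : C(ℝ, E), ∃ c : ℕ → ℝ, ∀ (m : ℕ) (s : ℝ), |s| ≤ m → φ (s + c m) = d m s :=
  ⟨PlateauGlue.glue d, PlateauGlue.center, fun _ _ => PlateauGlue.glue_add_center d⟩

section MeanPeriodic

open TopologicalSpace

variable {B : Type*} [NormedAddCommGroup B] [NormedSpace ℂ B]

theorem exists_dense_range_translateBy [SeparableSpace B] :
    ∃ φ : C(ℝ, B), Dense (range (translateBy φ)) := by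
  have := UniformSpace.secondCountable_of_separable B
  obtain ⟨φ, c, hφ⟩ :=
    ContinuousMap.exists_add_eq_of_abs_le fun m => denseSeq C(ℝ, B) m.unpair.1
  refine ⟨φ, dense_closure.1 <| (denseRange_denseSeq C(ℝ, B)).mono ?_⟩
  rintro _ ⟨k, rfl⟩
  -- the `k`-th element of the dense sequence is glued in at every index `Nat.pair k j`
  have hpair : Tendsto (Nat.pair k) atTop atTop :=
    tendsto_atTop_mono (Nat.right_le_pair k) tendsto_id
  refine mem_closure_of_tendsto (b := atTop) (f := fun j => translateBy φ (c (Nat.pair k j)))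
    (ContinuousMap.tendsto_of_eventually_eqOn fun K hK => ?_)
    (Eventually.of_forall fun j => mem_range_self _)
  obtain ⟨r, hr⟩ := hK.isBounded.subset_closedBall 0
  filter_upwards [hpair.eventually_ge_atTop ⌈r⌉₊] with j hj s hs
  have hs : |s| ≤ Nat.pair k j := calc
    |s| ≤ r := by simpa using hr hs
    _ ≤ Nat.pair k j := (Nat.le_ceil r).trans (by exact_mod_cast hj)
  simp [translateBy, hφ _ _ hs, Nat.unpair_pair]

theorem map_evalCLM_zero_span_range_translateBy (φ : C(ℝ, B)) :
    (Submodule.span ℂ (range (translateBy φ))).map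
        (ContinuousMap.evalCLM (M := B) ℂ (0 : ℝ)).toLinearMap =
      Submodule.span ℂ (range φ) := by
  rw [Submodule.map_span, ← range_comp]
  congr 2
  ext t
  simp [translateBy]

theorem separableSpace_of_tau_eq_univ {φ : C(ℝ, B)} (h : tau φ = univ) : SeparableSpace B := by
  refine isSeparable_univ_iff.1 <| ((isSeparable_range φ.continuous).span (R := ℂ)).closure.mono
    fun b _ => ?_
  have hb : ContinuousMap.const ℝ b ∈ tau φ := h ▸ mem_univ _
  rw [← map_evalCLM_zero_span_range_translateBy, Submodule.map_coe]
  exact image_closure_subset_closure_image (ContinuousMap.evalCLM ℂ (0 : ℝ)).continuous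
    ⟨_, hb, rfl⟩

end MeanPeriodic

theorem separable_iff_exists_not_meanPeriodic_general
    (B : Type*) [NormedAddCommGroup B] [NormedSpace ℂ B] :
    TopologicalSpace.SeparableSpace B ↔ ∃ φ : C(ℝ, B), tau φ = Set.univ := by
  refine ⟨fun _ => ?_, fun ⟨φ, hφ⟩ => separableSpace_of_tau_eq_univ hφ⟩
  obtain ⟨φ, hφ⟩ := exists_dense_range_translateBy (B := B)
  exact ⟨φ, eq_univ_of_univ_subset <| hφ.closure_eq ▸ closure_mono Submodule.subset_span⟩

/-- A Banach space `B` over `ℂ` is separable if and only if there exists a function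
`φ ∈ C(ℝ, B)` which is not mean periodic, i.e. the closed linear span of the translateBys
of `φ` is all of `C(ℝ, B)`. -/
theorem separable_iff_exists_not_meanPeriodic
    (B : Type*) [NormedAddCommGroup B] [NormedSpace ℂ B] [CompleteSpace B] :
    TopologicalSpace.SeparableSpace B ↔ ∃ φ : C(ℝ, B), tau φ = Set.univ :=
  separable_iff_exists_not_meanPeriodic_general B
end

section
/- If a Banach space B over ℂ is not separable, then every function φ in C(ℝ, B) is mean periodic; that is, the closed linear span of the translates of φ is a proper subset of C(ℝ, B). -/
open Topology

/-!
Every `f ∈ τ(φ)` takes its values in the closed linear span of the range of `φ`, since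
evaluation at a point is continuous and linear and sends each translate of `φ` to a value
of `φ`. That span is separable, so when `B` is not separable it misses some `b`, and the
constant function `b` lies outside `τ(φ)`.
-/

section MeanPeriodic

variable {B : Type*} [NormedAddCommGroup B] [NormedSpace ℂ B]

theorem apply_mem_closure_span_range_of_mem_tau {φ f : C(ℝ, B)} (hf : f ∈ tau φ) (s : ℝ) :
    f s ∈ closure (Submodule.span ℂ (Set.range φ) : Set B) := by
  let evalAt : C(ℝ, B) →ₗ[ℂ] B :=
    { toFun := fun g => g s
      map_add' := fun _ _ => rfl
      map_smul' := fun _ _ => rfl }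
  have span_translates_le :
      (Submodule.span ℂ (Set.range (translateBy φ))).map evalAt ≤
        Submodule.span ℂ (Set.range φ) := by
    rw [Submodule.map_span, Submodule.span_le]
    rintro _ ⟨_, ⟨t, rfl⟩, rfl⟩
    exact Submodule.subset_span ⟨s + t, rfl⟩
  refine closure_minimal (fun g hg => ?_)
    (isClosed_closure.preimage (continuous_eval_const s)) hf
  exact subset_closure (span_translates_le ⟨g, hg, rfl⟩)

theorem isSeparable_closure_span_range (φ : C(ℝ, B)) :
    TopologicalSpace.IsSeparable (closure (Submodule.span ℂ (Set.range φ) : Set B)) :=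
  (TopologicalSpace.isSeparable_range φ.continuous).span.closure

theorem const_notMem_tau_of_notMem {φ : C(ℝ, B)} {b : B}
    (hb : b ∉ closure (Submodule.span ℂ (Set.range φ) : Set B)) :
    ContinuousMap.const ℝ b ∉ tau φ :=
  fun hmem => hb (apply_mem_closure_span_range_of_mem_tau hmem 0)

end MeanPeriodic

theorem all_meanPeriodic_of_not_separable_general
    (B : Type*) [NormedAddCommGroup B] [NormedSpace ℂ B]
    (h : ¬ TopologicalSpace.SeparableSpace B) :
    ∀ φ : C(ℝ, B), tau φ ≠ Set.univ := by
  intro φ htau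
  obtain ⟨b, hb⟩ : ∃ b : B, b ∉ closure (Submodule.span ℂ (Set.range φ) : Set B) := by
    by_contra! hall
    exact h (TopologicalSpace.isSeparable_univ_iff.1
      ((isSeparable_closure_span_range φ).mono fun x _ => hall x))
  exact const_notMem_tau_of_notMem hb (htau ▸ Set.mem_univ _)

/-- If a Banach space `B` over `ℂ` is not separable, then every `φ ∈ C(ℝ, B)` is
mean periodic: the closed linear span of the translates of `φ` is a proper subset
of `C(ℝ, B)`. -/
theorem all_meanPeriodic_of_not_separable
    (B : Type*) [NormedAddCommGroup B] [NormedSpace ℂ B] [CompleteSpace B]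
    (h : ¬ TopologicalSpace.SeparableSpace B) :
    ∀ φ : C(ℝ, B), tau φ ≠ Set.univ :=
  all_meanPeriodic_of_not_separable_general B h
end

section
/- If a Banach space B over ℂ is separable, then there exists a function ψ in C(ℝ, B) that is not mean periodic, i.e., the linear span of the translates of ψ is dense in C(ℝ, B). -/
open Topology

set_option maxHeartbeats 1000000

/-- If a Banach space `B` over `ℂ` is separable, then there exists `ψ ∈ C(ℝ, B)` which
is not mean periodic: the linear span of the translates of `ψ` is dense in `C(ℝ, B)`. -/
theorem exists_not_meanPeriodic_of_separable
    (B : Type*) [NormedAddCommGroup B] [NormedSpace ℂ B] [CompleteSpace B]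
    [TopologicalSpace.SeparableSpace B] :
    ∃ ψ : C(ℝ, B), Dense (Submodule.span ℂ (Set.range (translateBy ψ)) : Set C(ℝ, B)) := by
  haveI : SecondCountableTopology B :=
    UniformSpace.secondCountable_of_separable B
  set d : ℕ → C(ℝ, B) := TopologicalSpace.denseSeq C(ℝ, B) with hd_def
  have hd : DenseRange d := TopologicalSpace.denseRange_denseSeq C(ℝ, B)
  -- the dense sequence, re-enumerated so every element appears with arbitrarily large index
  set f : ℕ → C(ℝ, B) := fun k => d (Nat.unpair k).1 with hf_def
  -- centers of the gluing intervals
  set a : ℕ → ℝ := fun k => ((k : ℝ) + 1) ^ 2 with ha_def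
  -- bump-localized translated copies of `f k`
  set g : ℕ → ℝ → B :=
    fun k s => (min 1 (max 0 (((k : ℝ) + 1) - |s - a k|))) • f k (s - a k) with hg_def
  have hgcont : ∀ k, Continuous (g k) := by
    intro k
    apply Continuous.smul
    · exact (continuous_algebraMap ℝ ℂ).comp (continuous_const.min (continuous_const.max (continuous_const.sub
        (continuous_abs.comp ((continuous_id (X := ℝ)).sub (continuous_const (y := a k)))))))
    · exact (f k).continuous.comp (continuous_id.sub continuous_const)
  have hg0 : ∀ (k : ℕ) (s : ℝ), (k : ℝ) + 1 ≤ |s - a k| → g k s = 0 := by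
    intro k s h
    have : max 0 (((k : ℝ) + 1) - |s - a k|) = 0 := max_eq_left (by linarith)
    simp [hg_def, this]
  have hg1 : ∀ k (s : ℝ), |s - a k| ≤ k → g k s = f k (s - a k) := by
    intro k s h
    have h1 : (1 : ℝ) ≤ ((k : ℝ) + 1) - |s - a k| := by linarith
    have : min 1 (max 0 (((k : ℝ) + 1) - |s - a k|)) = 1 := by
      rw [max_eq_right (by linarith), min_eq_left h1]
    simp [hg_def, this]
  have hlow : ∀ (k : ℕ) (s : ℝ), s ≤ (k : ℝ) ^ 2 + k → g k s = 0 := by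
    intro k s h
    apply hg0
    have : (k : ℝ) + 1 ≤ a k - s := by simp only [ha_def]; nlinarith
    calc (k : ℝ) + 1 ≤ a k - s := this
      _ = -(s - a k) := by ring
      _ ≤ |s - a k| := neg_le_abs _
  -- partial sums
  set S : ℕ → ℝ → B := fun n s => ∑ j ∈ Finset.range n, g j s with hS_def
  have hScont : ∀ n, Continuous (S n) := fun n =>
    continuous_finset_sum _ fun j _ => hgcont j
  have hstab : ∀ m n : ℕ, ∀ s : ℝ, m ≤ n → s ≤ (m : ℝ) ^ 2 + m → S n s = S m s := by
    intro m n s hmn hs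
    refine (Finset.sum_subset (Finset.range_subset_range.2 hmn) ?_).symm
    intro j hj hjm
    simp only [Finset.mem_range, not_lt] at hjm
    apply hlow
    have : (m : ℝ) ≤ j := Nat.cast_le.2 hjm
    nlinarith
  set M : ℝ → ℕ := fun s => ⌈s⌉.toNat + 1 with hM_def
  have hMge : ∀ s : ℝ, s ≤ (M s : ℝ) := by
    intro s
    have h1 : s ≤ (⌈s⌉ : ℝ) := Int.le_ceil s
    have h2 : ((⌈s⌉ : ℤ) : ℝ) ≤ ((⌈s⌉.toNat : ℤ) : ℝ) := by exact_mod_cast Int.self_le_toNat _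
    simp only [hM_def]
    push_cast
    push_cast at h2
    linarith
  set F : ℝ → B := fun s => S (M s) s with hF_def
  have hF : ∀ (n : ℕ) (s : ℝ), s ≤ (n : ℝ) ^ 2 + n → F s = S n s := by
    intro n s hs
    have hMs : s ≤ (M s : ℝ) ^ 2 + M s := by
      have := hMge s
      nlinarith [sq_nonneg ((M s : ℝ))]
    rcases le_total (M s) n with h | h
    · exact (hstab (M s) n s h hMs).symm
    · exact hstab n (M s) s h hs
  have hFcont : Continuous F := by
    rw [continuous_iff_continuousAt]
    intro s₀
    set n : ℕ := M s₀ + 1 with hn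
    have hs₀ : s₀ < (n : ℝ) := by
      refine lt_of_le_of_lt (hMge s₀) ?_
      exact_mod_cast Nat.lt_succ_self (M s₀)
    have hmem : Set.Iio ((n : ℝ)) ∈ 𝓝 s₀ := Iio_mem_nhds hs₀
    refine (hScont n).continuousAt.congr ?_
    filter_upwards [hmem] with s hs
    refine (hF n s ?_).symm
    have : (n : ℝ) ≤ (n : ℝ) ^ 2 + n := by nlinarith [sq_nonneg ((n : ℝ))]
    exact le_of_lt (lt_of_lt_of_le hs this)
  set ψ : C(ℝ, B) := ⟨F, hFcont⟩ with hψ_def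
  have htr : ∀ (k : ℕ) (s : ℝ), |s| ≤ k → translateBy ψ (a k) s = f k s := by
    intro k s hs
    obtain ⟨hs1, hs2⟩ := abs_le.1 hs
    have h1 : translateBy ψ (a k) s = F (s + a k) := rfl
    have hak : a k = ((k : ℝ) + 1) ^ 2 := rfl
    have h2 : F (s + a k) = S (k + 1) (s + a k) := by
      refine hF (k + 1) _ ?_
      push_cast
      rw [hak]
      linarith
    rw [h1, h2]
    show (∑ j ∈ Finset.range (k + 1), g j (s + a k)) = f k s
    rw [Finset.sum_range_succ]
    have hz : ∀ j ∈ Finset.range k, g j (s + a k) = 0 := by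
      intro j hj
      have hjk : (j : ℝ) + 1 ≤ k := by exact_mod_cast Finset.mem_range.1 hj
      apply hg0
      have haj : a j = ((j : ℝ) + 1) ^ 2 := rfl
      have : (j : ℝ) + 1 ≤ s + a k - a j := by rw [hak, haj]; nlinarith
      exact le_trans this (le_abs_self _)
    rw [Finset.sum_eq_zero hz, zero_add]
    have : g k (s + a k) = f k (s + a k - a k) := by
      apply hg1
      have : s + a k - a k = s := by ring
      rw [this]
      exact hs
    rw [this]
    congr 1
    ring
  refine ⟨ψ, ?_⟩
  have hsub : Set.range d ⊆
      closure (Submodule.span ℂ (Set.range (translateBy ψ)) : Set C(ℝ, B)) := by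
    rintro _ ⟨j, rfl⟩
    have htend : Filter.Tendsto (fun m => translateBy ψ (a (Nat.pair j m)))
        Filter.atTop (𝓝 (d j)) := by
      rw [ContinuousMap.tendsto_iff_forall_isCompact_tendstoUniformlyOn]
      intro K hK
      obtain ⟨r, hr⟩ := hK.isBounded.subset_closedBall 0
      rw [Metric.tendstoUniformlyOn_iff]
      intro ε hε
      obtain ⟨N, hN⟩ := exists_nat_ge r
      filter_upwards [Filter.eventually_ge_atTop N] with m hm x hx
      have hxr : |x| ≤ r := by
        have := hr hx
        rwa [Metric.mem_closedBall, Real.dist_eq, sub_zero] at this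
      have hkm : (N : ℝ) ≤ (Nat.pair j m : ℝ) := by
        exact_mod_cast le_trans hm (Nat.right_le_pair j m)
      have hxk : |x| ≤ (Nat.pair j m : ℝ) := le_trans hxr (le_trans hN hkm)
      have heq : translateBy ψ (a (Nat.pair j m)) x = d j x := by
        rw [htr (Nat.pair j m) x hxk, hf_def]
        simp [Nat.unpair_pair]
      rw [heq, dist_self]
      exact hε
    refine mem_closure_of_tendsto htend ?_
    filter_upwards with m
    exact Submodule.subset_span ⟨a (Nat.pair j m), rfl⟩
  have hdc : Dense (closure (Submodule.span ℂ (Set.range (translateBy ψ)) : Set C(ℝ, B))) :=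
    hd.mono hsub
  rwa [dense_closure] at hdc
end

section
/- There exists a function φ in C(ℝ, ℓ¹(ℕ, ℂ)) that is not mean periodic; that is, the linear span of the translates of φ is dense in C(ℝ, ℓ¹(ℕ, ℂ)). -/
open Topology

namespace NMP

open Set Function Filter

local notation "B" => lp (fun _ : ℕ => ℂ) 1

/-- The span of the `lp.single`s is dense in ℓ¹. -/
lemma dense_span_single :
    Dense (Submodule.span ℂ (Set.range fun i : ℕ => lp.single 1 i (1 : ℂ)) : Set B) := by
  intro f
  have hsum : HasSum (fun i : ℕ => lp.single 1 i (f i : ℂ)) f :=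
    lp.hasSum_single (by norm_num) f
  refine mem_closure_of_tendsto hsum (Eventually.of_forall fun s => ?_)
  refine Submodule.sum_mem _ fun i _ => ?_
  have h2 := lp.single_smul (E := fun _ : ℕ => ℂ) 1 i (f i : ℂ) (1 : ℂ)
  rw [smul_eq_mul, mul_one] at h2
  rw [h2]
  exact Submodule.smul_mem _ _ (Submodule.subset_span (Set.mem_range_self i))

instance sep : TopologicalSpace.SeparableSpace B := by
  have hc : (Set.range fun i : ℕ => lp.single 1 i (1 : ℂ)).Countable := Set.countable_range _
  have h1 : TopologicalSpace.IsSeparable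
      (Submodule.span ℂ (Set.range fun i : ℕ => lp.single 1 i (1 : ℂ)) : Set B) :=
    hc.isSeparable.span
  have h2 := h1.closure
  rw [dense_span_single.closure_eq] at h2
  exact TopologicalSpace.isSeparable_univ_iff.1 h2

instance : SecondCountableTopology B := UniformSpace.secondCountable_of_separable _

/-- first component of the pairing -/
def kk (n : ℕ) : ℕ := n.unpair.1
/-- second component of the pairing -/
def mm (n : ℕ) : ℕ := n.unpair.2
/-- center of the `n`-th window -/
noncomputable def cc (n : ℕ) : ℝ := ((n : ℝ) + 1) ^ 3

lemma mm_le (n : ℕ) : mm n ≤ n := n.unpair_right_le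
lemma kk_pair (a b : ℕ) : kk (Nat.pair a b) = a := by simp [kk, Nat.unpair_pair]
lemma mm_pair (a b : ℕ) : mm (Nat.pair a b) = b := by simp [mm, Nat.unpair_pair]

/-- plateau cutoff around `cc n` of half-width `mm n + 1` -/
noncomputable def bump (n : ℕ) (s : ℝ) : ℝ :=
  max 0 (min 1 ((mm n + 1 : ℝ) - |s - cc n|))

lemma bump_continuous (n : ℕ) : Continuous (bump n) := by
  unfold bump
  exact continuous_const.max <| continuous_const.min <|
    continuous_const.sub (continuous_id.sub continuous_const).abs

lemma bump_eq_zero {n : ℕ} {s : ℝ} (h : (mm n + 1 : ℝ) ≤ |s - cc n|) : bump n s = 0 := by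
  unfold bump
  exact max_eq_left <| (min_le_right _ _).trans (by linarith)

lemma bump_eq_one {n : ℕ} {s : ℝ} (h : |s - cc n| ≤ mm n) : bump n s = 1 := by
  unfold bump
  rw [min_eq_left (by linarith), max_eq_right zero_le_one]

lemma abs_lt_of_bump_ne {n : ℕ} {s : ℝ} (h : bump n s ≠ 0) : |s - cc n| < mm n + 1 := by
  by_contra hc
  exact h (bump_eq_zero (le_of_not_gt hc))

/-- the `n`-th windowed copy -/
noncomputable def F (g : ℕ → C(ℝ, B)) (n : ℕ) (s : ℝ) : B :=
  bump n s • g (kk n) (s - cc n)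

lemma F_continuous (g : ℕ → C(ℝ, B)) (n : ℕ) : Continuous (F g n) :=
  (bump_continuous n).smul <| (g (kk n)).continuous.comp (continuous_id.sub continuous_const)

lemma support_F (g : ℕ → C(ℝ, B)) (n : ℕ) :
    support (F g n) ⊆ Icc (cc n - ((n : ℝ) + 1)) (cc n + ((n : ℝ) + 1)) := by
  intro s hs
  have hb : bump n s ≠ 0 := by
    intro h; apply hs; simp [F, h]
  have h1 := abs_lt_of_bump_ne hb
  have hmn : (mm n : ℝ) ≤ n := by exact_mod_cast mm_le n
  have := abs_le.1 h1.le
  constructor <;> [linarith [this.1]; linarith [this.2]]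

lemma locallyFinite (g : ℕ → C(ℝ, B)) : LocallyFinite fun n => support (F g n) := by
  intro x
  refine ⟨Set.Iio (x + 1), Iio_mem_nhds (by linarith), ?_⟩
  have hsub : {n : ℕ | (support (F g n) ∩ Set.Iio (x + 1)).Nonempty}
      ⊆ {n : ℕ | n < ⌈x + 1⌉₊} := by
    rintro n ⟨s, hsF, hs⟩
    have h1 := support_F g n hsF
    have h3 : (n : ℝ) ≤ cc n - ((n : ℝ) + 1) := by
      unfold cc; nlinarith [(n.cast_nonneg : (0:ℝ) ≤ n), pow_nonneg (n.cast_nonneg : (0:ℝ) ≤ n) 3, sq_nonneg ((n:ℝ))]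
    simp only [mem_Iio] at hs
    simp only [mem_setOf_eq]
    rw [Nat.lt_ceil]
    exact lt_of_le_of_lt (h3.trans h1.1) hs
  exact (Set.finite_lt_nat _).subset hsub

/-- the glued function -/
noncomputable def phi (g : ℕ → C(ℝ, B)) : C(ℝ, B) :=
  ⟨fun s => ∑ᶠ n, F g n s, continuous_finsum (F_continuous g) (locallyFinite g)⟩

lemma cc_gap {j n : ℕ} (h : j < n) : cc j + ((n : ℝ) + j + 2) ≤ cc n := by
  unfold cc
  have hj : (j : ℝ) + 1 ≤ n := by exact_mod_cast h
  have hj0 : (0 : ℝ) ≤ j := j.cast_nonneg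
  nlinarith [sq_nonneg ((n : ℝ) - j), sq_nonneg ((n : ℝ) + j)]

lemma cc_gap' {j n : ℕ} (h : j ≠ n) : (n : ℝ) + j + 2 ≤ |cc n - cc j| := by
  rcases h.lt_or_gt with h | h
  · have := cc_gap h
    rw [abs_of_nonneg (by linarith)]; linarith
  · have := cc_gap h
    rw [abs_of_nonpos (by linarith)]; linarith

lemma phi_eval (g : ℕ → C(ℝ, B)) (n : ℕ) {s : ℝ} (hs : |s| ≤ mm n) :
    phi g (s + cc n) = g (kk n) s := by
  have key : ∀ j, j ≠ n → F g j (s + cc n) = 0 := by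
    intro j hj
    have hgap := cc_gap' hj
    have hmn : (mm n : ℝ) ≤ n := by exact_mod_cast mm_le n
    have hmj : (mm j : ℝ) ≤ j := by exact_mod_cast mm_le j
    have htri : |cc n - cc j| ≤ |s + cc n - cc j| + |s| := by
      have := abs_sub (s + cc n - cc j) s
      calc |cc n - cc j| = |(s + cc n - cc j) - s| := by ring_nf
        _ ≤ |s + cc n - cc j| + |s| := abs_sub _ _
    have hz : bump j (s + cc n) = 0 := by
      refine bump_eq_zero ?_
      linarith
    simp [F, hz]
  have h1 : phi g (s + cc n) = F g n (s + cc n) := by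
    have : (∑ᶠ j, F g j (s + cc n)) = F g n (s + cc n) :=
      finsum_eq_single _ n key
    simpa [phi] using this
  have hb : bump n (s + cc n) = 1 := by
    refine bump_eq_one ?_
    rw [show s + cc n - cc n = s by ring]
    exact hs
  rw [h1]
  simp [F, hb, show s + cc n - cc n = s by ring]

end NMP

/-- There exists a function in `C(ℝ, ℓ¹(ℕ, ℂ))` which is not mean periodic: the linear
span of its translates is dense. -/
theorem exists_not_meanPeriodic_l1 :
    ∃ φ : C(ℝ, lp (fun _ : ℕ => ℂ) 1),
      Dense (Submodule.span ℂ (Set.range (translateBy φ)) :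
        Set C(ℝ, lp (fun _ : ℕ => ℂ) 1)) := by
  classical
  haveI : Nonempty C(ℝ, lp (fun _ : ℕ => ℂ) 1) := ⟨0⟩
  set g : ℕ → C(ℝ, lp (fun _ : ℕ => ℂ) 1) :=
    TopologicalSpace.denseSeq C(ℝ, lp (fun _ : ℕ => ℂ) 1) with hg
  have hdense : DenseRange g := TopologicalSpace.denseRange_denseSeq _
  refine ⟨NMP.phi g, ?_⟩
  set S : Set C(ℝ, lp (fun _ : ℕ => ℂ) 1) :=
    ((Submodule.span ℂ (Set.range (translateBy (NMP.phi g))) :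
      Submodule ℂ C(ℝ, lp (fun _ : ℕ => ℂ) 1)) : Set C(ℝ, lp (fun _ : ℕ => ℂ) 1)) with hS
  have hmem : ∀ κ : ℕ, g κ ∈ closure S := by
    intro κ
    have htend : Filter.Tendsto (fun j : ℕ => translateBy (NMP.phi g) (NMP.cc (Nat.pair κ j)))
        Filter.atTop (𝓝 (g κ)) := by
      rw [ContinuousMap.tendsto_iff_forall_isCompact_tendstoUniformlyOn]
      intro K hK
      obtain ⟨R, hR⟩ := hK.isBounded.subset_closedBall 0
      rw [Metric.tendstoUniformlyOn_iff]
      intro ε hε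
      filter_upwards [Filter.eventually_ge_atTop ⌈R⌉₊] with j hj x hx
      have hxR : |x| ≤ R := by
        have := hR hx
        simpa [Real.dist_eq] using this
      have hjx : |x| ≤ (NMP.mm (Nat.pair κ j) : ℝ) := by
        rw [NMP.mm_pair]
        calc |x| ≤ R := hxR
          _ ≤ (⌈R⌉₊ : ℝ) := Nat.le_ceil R
          _ ≤ (j : ℝ) := by exact_mod_cast hj
      have heq := NMP.phi_eval g (Nat.pair κ j) hjx
      rw [NMP.kk_pair] at heq
      have heq2 : (translateBy (NMP.phi g) (NMP.cc (Nat.pair κ j))) x = g κ x := by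
        simpa [translateBy] using heq
      rw [heq2]
      simpa using hε
    refine mem_closure_of_tendsto htend (Filter.Eventually.of_forall fun j => ?_)
    exact Submodule.subset_span (Set.mem_range_self _)
  intro x
  have hx : x ∈ closure (Set.range g) := hdense x
  exact closure_minimal (Set.range_subset_iff.2 hmem) isClosed_closure hx
end

section
/- Let (λₖ)ₖ be a sequence of pairwise distinct real numbers and (cₖ)ₖ a sequence of complex numbers with Σₖ |cₖ| < ∞. If Σₖ cₖ e^{i λₖ s} = 0 for every s ∈ ℝ, then cₖ = 0 for every k. -/
open MeasureTheory Filter Complex intervalIntegral Topology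

/-- the norm of the exponential of a purely imaginary number is 1. -/
lemma norm_exp_of_re_eq_zero (z : ℂ) (hz : z.re = 0) : ‖Complex.exp z‖ = 1 := by
  rw [Complex.norm_exp, hz, Real.exp_zero]

lemma norm_exp_I_mul_mul (r s : ℝ) : ‖Complex.exp (Complex.I * (r : ℂ) * (s : ℂ))‖ = 1 :=
  norm_exp_of_re_eq_zero _ (by simp)

/-- If `(λₖ)` are pairwise distinct reals, `∑ₖ |cₖ| < ∞`, and the almost periodic sum
`∑ₖ cₖ e^{i λₖ s}` vanishes for every real `s`, then all coefficients `cₖ` vanish. -/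
theorem coeffs_eq_zero_of_exponential_sum_eq_zero
    (lam : ℕ → ℝ) (hlam : Function.Injective lam)
    (c : ℕ → ℂ) (hc : Summable fun k => ‖c k‖)
    (h : ∀ s : ℝ, ∑' k, c k * Complex.exp (Complex.I * (lam k : ℂ) * (s : ℂ)) = 0) :
    ∀ k, c k = 0 := by
  intro n
  set μ : ℕ → ℝ := fun k => lam k - lam n with hμ
  -- twisted sum vanishes
  have hg : ∀ s : ℝ, ∑' k, c k * Complex.exp (Complex.I * (μ k : ℂ) * (s : ℂ)) = 0 := by
    intro s
    have key : ∀ k, c k * Complex.exp (Complex.I * (μ k : ℂ) * (s : ℂ)) =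
        (c k * Complex.exp (Complex.I * (lam k : ℂ) * (s : ℂ))) *
          Complex.exp (-(Complex.I * (lam n : ℂ) * (s : ℂ))) := by
      intro k
      have he : Complex.I * (μ k : ℂ) * (s : ℂ)
          = Complex.I * (lam k : ℂ) * (s : ℂ) + -(Complex.I * (lam n : ℂ) * (s : ℂ)) := by
        push_cast [hμ]; ring
      rw [he, Complex.exp_add, ← mul_assoc]
    simp_rw [key]
    rw [tsum_mul_right, h s, zero_mul]
  -- the averaged coefficient functions
  set F : ℝ → ℕ → ℂ := fun T k =>
    c k * ((2 * (T : ℂ))⁻¹ * ∫ s in (-T)..T, Complex.exp (Complex.I * (μ k : ℂ) * (s : ℂ)))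
    with hF
  have hnorminv : ∀ T : ℝ, 0 < T → ‖(2 * (T : ℂ))⁻¹‖ = (2 * T)⁻¹ := by
    intro T hT
    rw [norm_inv]
    have : (2 * (T : ℂ)) = ((2 * T : ℝ) : ℂ) := by push_cast; ring
    rw [this, Complex.norm_real, Real.norm_eq_abs, abs_of_pos (by linarith)]
  -- For T > 0, the sum of F T k is 0
  have hsum0 : ∀ T : ℝ, 0 < T → ∑' k, F T k = 0 := by
    intro T hT
    have hle : (-T : ℝ) ≤ T := by linarith
    have hint : ∀ k, IntegrableOn
        (fun s : ℝ => c k * Complex.exp (Complex.I * (μ k : ℂ) * (s : ℂ)))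
        (Set.Ioc (-T) T) := by
      intro k
      apply Continuous.integrableOn_Ioc
      exact continuous_const.mul (Complex.continuous_exp.comp (by continuity))
    have hnorm : ∀ k, (∫ s in Set.Ioc (-T) T,
        ‖c k * Complex.exp (Complex.I * (μ k : ℂ) * (s : ℂ))‖) = (2 * T) * ‖c k‖ := by
      intro k
      have : ∀ s : ℝ, ‖c k * Complex.exp (Complex.I * (μ k : ℂ) * (s : ℂ))‖ = ‖c k‖ := by
        intro s; rw [norm_mul, norm_exp_I_mul_mul, mul_one]
      simp_rw [this]
      rw [setIntegral_const, measureReal_def, Real.volume_Ioc, smul_eq_mul,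
        ENNReal.toReal_ofReal (by linarith)]
      ring_nf
    have hswap : ∑' k, (∫ s in Set.Ioc (-T) T,
          c k * Complex.exp (Complex.I * (μ k : ℂ) * (s : ℂ)))
        = ∫ s in Set.Ioc (-T) T,
            (∑' k, c k * Complex.exp (Complex.I * (μ k : ℂ) * (s : ℂ))) := by
      apply integral_tsum_of_summable_integral_norm hint
      simp_rw [hnorm]
      exact hc.mul_left _
    have hswap0 : ∑' k, (∫ s in Set.Ioc (-T) T,
        c k * Complex.exp (Complex.I * (μ k : ℂ) * (s : ℂ))) = 0 := by
      rw [hswap]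
      simp_rw [hg]
      simp
    calc ∑' k, F T k
        = (2 * (T : ℂ))⁻¹ * ∑' k, (∫ s in Set.Ioc (-T) T,
            c k * Complex.exp (Complex.I * (μ k : ℂ) * (s : ℂ))) := by
          rw [← tsum_mul_left]
          apply tsum_congr
          intro k
          simp only [hF]
          rw [intervalIntegral.integral_of_le hle, MeasureTheory.integral_const_mul]
          ring
      _ = 0 := by rw [hswap0, mul_zero]
  -- Pointwise limits
  have hlim : ∀ k, Tendsto (fun T => F T k) atTop
      (𝓝 (if k = n then c n else 0)) := by
    intro k
    by_cases hk : k = n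
    · subst hk
      simp only [if_pos rfl]
      have hev : ∀ᶠ T in atTop, F T k = c k := by
        filter_upwards [eventually_gt_atTop (0 : ℝ)] with T hT
        have hμ0 : μ k = 0 := by simp [hμ]
        simp only [hF, hμ0, Complex.ofReal_zero, mul_zero, zero_mul, Complex.exp_zero]
        rw [intervalIntegral.integral_const, sub_neg_eq_add, Complex.real_smul, mul_one]
        have h2T : (2 * (T : ℂ)) ≠ 0 := by
          simp only [ne_eq, mul_eq_zero, Complex.ofReal_eq_zero]
          push_neg
          exact ⟨by norm_num, ne_of_gt hT⟩
        have hTT : (((T + T : ℝ)) : ℂ) = 2 * (T : ℂ) := by push_cast; ring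
        rw [hTT, inv_mul_cancel₀ h2T, mul_one]
      exact tendsto_const_nhds.congr' (hev.mono fun T hh => hh.symm)
    · simp only [if_neg hk]
      have hμne : μ k ≠ 0 := sub_ne_zero.mpr (fun hh => hk (hlam hh))
      have hcne : (Complex.I * (μ k : ℂ)) ≠ 0 := by
        simp [Complex.I_ne_zero, Complex.ofReal_eq_zero, hμne]
      apply squeeze_zero_norm' (a := fun T => (‖c k‖ * (2 / |μ k|)) * (2 * T)⁻¹)
      · filter_upwards [eventually_gt_atTop (0 : ℝ)] with T hT
        have hval : (∫ s in (-T)..T, Complex.exp (Complex.I * (μ k : ℂ) * (s : ℂ)))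
            = (Complex.exp ((Complex.I * (μ k : ℂ)) * (T : ℂ))
              - Complex.exp ((Complex.I * (μ k : ℂ)) * ((-T : ℝ) : ℂ)))
              / (Complex.I * (μ k : ℂ)) := by
          rw [← integral_exp_mul_complex hcne]
        have hbnd : ‖(∫ s in (-T)..T,
            Complex.exp (Complex.I * (μ k : ℂ) * (s : ℂ)))‖ ≤ 2 / |μ k| := by
          rw [hval, norm_div]
          have h1 : ‖Complex.exp ((Complex.I * (μ k : ℂ)) * (T : ℂ))‖ = 1 :=
            norm_exp_of_re_eq_zero _ (by simp)
          have h2 : ‖Complex.exp ((Complex.I * (μ k : ℂ)) * ((-T : ℝ) : ℂ))‖ = 1 :=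
            norm_exp_of_re_eq_zero _ (by simp)
          have h3 : ‖Complex.I * (μ k : ℂ)‖ = |μ k| := by
            rw [norm_mul, Complex.norm_I, one_mul, Complex.norm_real, Real.norm_eq_abs]
          rw [h3]
          gcongr
          calc ‖Complex.exp ((Complex.I * (μ k : ℂ)) * (T : ℂ))
              - Complex.exp ((Complex.I * (μ k : ℂ)) * ((-T : ℝ) : ℂ))‖
              ≤ _ + _ := norm_sub_le _ _
            _ = 2 := by rw [h1, h2]; norm_num
        simp only [hF, norm_mul]
        rw [hnorminv T hT]
        calc ‖c k‖ * ((2 * T)⁻¹ * ‖(∫ s in (-T)..T,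
              Complex.exp (Complex.I * (μ k : ℂ) * (s : ℂ)))‖)
            ≤ ‖c k‖ * ((2 * T)⁻¹ * (2 / |μ k|)) := by
              apply mul_le_mul_of_nonneg_left ?_ (norm_nonneg _)
              apply mul_le_mul_of_nonneg_left hbnd (by positivity)
          _ = (‖c k‖ * (2 / |μ k|)) * (2 * T)⁻¹ := by ring
      · have h2 : Tendsto (fun T : ℝ => (2 * T)⁻¹) atTop (𝓝 0) := by
          apply Tendsto.inv_tendsto_atTop
          exact tendsto_id.const_mul_atTop (by norm_num)
        simpa using h2.const_mul (‖c k‖ * (2 / |μ k|))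
  -- uniform bound
  have hbound : ∀ᶠ T in atTop, ∀ k, ‖F T k‖ ≤ ‖c k‖ := by
    filter_upwards [eventually_gt_atTop (0 : ℝ)] with T hT
    intro k
    have hintb : ‖(∫ s in (-T)..T,
        Complex.exp (Complex.I * (μ k : ℂ) * (s : ℂ)))‖ ≤ 1 * |T - (-T)| := by
      apply intervalIntegral.norm_integral_le_of_norm_le_const
      intro s _
      rw [norm_exp_I_mul_mul]
    have habs : |T - (-T)| = 2 * T := by
      rw [sub_neg_eq_add, abs_of_pos (by linarith)]; ring
    simp only [hF, norm_mul]
    rw [hnorminv T hT]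
    have : (2 * T)⁻¹ * ‖(∫ s in (-T)..T,
        Complex.exp (Complex.I * (μ k : ℂ) * (s : ℂ)))‖ ≤ 1 := by
      rw [one_mul, habs] at hintb
      calc (2 * T)⁻¹ * ‖(∫ s in (-T)..T,
            Complex.exp (Complex.I * (μ k : ℂ) * (s : ℂ)))‖
          ≤ (2 * T)⁻¹ * (2 * T) := mul_le_mul_of_nonneg_left hintb (by positivity)
        _ = 1 := inv_mul_cancel₀ (by positivity)
    calc ‖c k‖ * ((2 * T)⁻¹ * ‖(∫ s in (-T)..T,
          Complex.exp (Complex.I * (μ k : ℂ) * (s : ℂ)))‖)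
        ≤ ‖c k‖ * 1 := mul_le_mul_of_nonneg_left this (norm_nonneg _)
      _ = ‖c k‖ := mul_one _
  -- combine
  have hT : Tendsto (fun T => ∑' k, F T k) atTop
      (𝓝 (∑' k, if k = n then c n else 0)) :=
    tendsto_tsum_of_dominated_convergence hc hlim hbound
  have hT0 : Tendsto (fun T : ℝ => ∑' k, F T k) atTop (𝓝 (0 : ℂ)) := by
    have hev : (fun T : ℝ => ∑' k, F T k) =ᶠ[atTop] (fun _ => (0 : ℂ)) := by
      filter_upwards [eventually_gt_atTop (0 : ℝ)] with T hTpos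
      exact hsum0 T hTpos
    exact Tendsto.congr' hev.symm tendsto_const_nhds
  have := tendsto_nhds_unique hT hT0
  rwa [tsum_ite_eq n (fun _ => c n)] at this
end

section
/- For each n ∈ ℕ let μₙ be a complex Borel measure with compact support contained in a fixed compact set K ⊆ ℝ, and suppose the total variations ‖μₙ‖ are uniformly bounded. Let (aⱼ(n)) be complex numbers with aⱼ(n) ≠ 0 for all j, n and Σₙ Σⱼ |aⱼ(n)| < ∞, and let (λⱼ(n)) be pairwise distinct real numbers such that for each n the sequence (λⱼ(n))ⱼ converges to some real λ(n). If Σₙ Σⱼ aⱼ(n) μ̂ₙ(λⱼ(n)) e^{i λⱼ(n) s} = 0 for every s ∈ ℝ, then μₙ = 0 for every n. -/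
open MeasureTheory Filter Topology

/-- The integral of a function against a complex measure, defined via the Jordan
decompositions of the real and imaginary parts. -/
noncomputable def cmIntegral (μ : ComplexMeasure ℝ) (f : ℝ → ℂ) : ℂ :=
  ((∫ x, f x ∂(ComplexMeasure.re μ).toJordanDecomposition.posPart) -
      ∫ x, f x ∂(ComplexMeasure.re μ).toJordanDecomposition.negPart) +
    Complex.I • ((∫ x, f x ∂(ComplexMeasure.im μ).toJordanDecomposition.posPart) -
      ∫ x, f x ∂(ComplexMeasure.im μ).toJordanDecomposition.negPart)

/-- The Fourier transform `μ̂(λ) = ∫ e^{-iλx} dμ(x)` of a complex measure on `ℝ`. -/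
noncomputable def cmFourier (μ : ComplexMeasure ℝ) (l : ℝ) : ℂ :=
  cmIntegral μ fun x => Complex.exp (-(Complex.I * (l : ℂ) * (x : ℂ)))

/-- The total variation of a complex measure, as the sum of the total variations of its
real and imaginary parts. -/
noncomputable def cmTotalVariation (μ : ComplexMeasure ℝ) : ENNReal :=
  (ComplexMeasure.re μ).totalVariation Set.univ + (ComplexMeasure.im μ).totalVariation Set.univ

namespace CMAux

lemma integrable_of_bdd {ν : Measure ℝ} [IsFiniteMeasure ν] {f : ℝ → ℂ} {M : ℝ}
    (hf : Continuous f) (h : ∀ᵐ x ∂ν, ‖f x‖ ≤ M) : Integrable f ν :=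
  ⟨hf.aestronglyMeasurable, HasFiniteIntegral.of_bounded h⟩

lemma norm_exp_eq_one {z : ℂ} (h : z.re = 0) : ‖Complex.exp z‖ = 1 := by
  rw [Complex.norm_exp, h, Real.exp_zero]

lemma norm_exp_neg_I_mul (l : ℝ) (x : ℝ) :
    ‖Complex.exp (-(Complex.I * (l : ℂ) * (x : ℂ)))‖ = 1 :=
  norm_exp_eq_one (by simp [Complex.mul_re])

lemma norm_integral_exp_le (ν : Measure ℝ) [IsFiniteMeasure ν] (l : ℝ) :
    ‖∫ x, Complex.exp (-(Complex.I * (l : ℂ) * (x : ℂ))) ∂ν‖ ≤ (ν Set.univ).toReal := by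
  have := norm_integral_le_of_norm_le_const (μ := ν)
    (f := fun x : ℝ => Complex.exp (-(Complex.I * (l : ℂ) * (x : ℂ)))) (C := 1)
    (Filter.Eventually.of_forall fun x => (norm_exp_neg_I_mul l x).le)
  simpa [measureReal_def] using this

lemma norm_cmFourier_le (μ : ComplexMeasure ℝ) (l : ℝ) :
    ‖cmFourier μ l‖ ≤ (cmTotalVariation μ).toReal := by
  set p1 := (ComplexMeasure.re μ).toJordanDecomposition.posPart
  set n1 := (ComplexMeasure.re μ).toJordanDecomposition.negPart
  set p2 := (ComplexMeasure.im μ).toJordanDecomposition.posPart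
  set n2 := (ComplexMeasure.im μ).toJordanDecomposition.negPart
  have h1 := norm_integral_exp_le p1 l
  have h2 := norm_integral_exp_le n1 l
  have h3 := norm_integral_exp_le p2 l
  have h4 := norm_integral_exp_le n2 l
  have hTV : (cmTotalVariation μ).toReal =
      (p1 Set.univ).toReal + (n1 Set.univ).toReal
        + ((p2 Set.univ).toReal + (n2 Set.univ).toReal) := by
    simp [cmTotalVariation, SignedMeasure.totalVariation, Measure.add_apply,
      ENNReal.toReal_add, measure_ne_top, p1, n1, p2, n2]
  rw [cmFourier, cmIntegral, hTV]
  calc ‖_ + _‖ ≤ ‖(∫ x, Complex.exp (-(Complex.I * (l:ℂ) * (x:ℂ))) ∂p1) -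
        ∫ x, Complex.exp (-(Complex.I * (l:ℂ) * (x:ℂ))) ∂n1‖ +
        ‖Complex.I • ((∫ x, Complex.exp (-(Complex.I * (l:ℂ) * (x:ℂ))) ∂p2) -
        ∫ x, Complex.exp (-(Complex.I * (l:ℂ) * (x:ℂ))) ∂n2)‖ := norm_add_le _ _
    _ ≤ _ := by
        rw [norm_smul]
        simp only [Complex.norm_I, one_mul]
        gcongr
        · exact (norm_sub_le _ _).trans (by gcongr)
        · exact (norm_sub_le _ _).trans (by gcongr)

lemma bohr {c : ℕ × ℕ → ℂ} {lm : ℕ × ℕ → ℝ} (hinj : Function.Injective lm)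
    (hc : Summable fun p => ‖c p‖) (q : ℕ × ℕ)
    (h2 : ∀ s : ℝ,
      ∑' p, c p * Complex.exp (Complex.I * ((lm p - lm q : ℝ) : ℂ) * (s : ℂ)) = 0) :
    c q = 0 := by
  set e : ℕ × ℕ → ℝ → ℂ :=
    fun p s => c p * Complex.exp (Complex.I * ((lm p - lm q : ℝ) : ℂ) * (s : ℂ)) with he
  have hnorm : ∀ p s, ‖e p s‖ = ‖c p‖ := by
    intro p s
    rw [he, norm_mul, norm_exp_eq_one (by simp [Complex.mul_re]), mul_one]
  have hnn : ∀ p s, (‖e p s‖₊ : NNReal) = ‖c p‖₊ :=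
    fun p s => NNReal.coe_injective (by simpa [coe_nnnorm] using hnorm p s)
  set g : ℝ → ℕ × ℕ → ℂ := fun T p => (1 / (2 * (T : ℂ))) * ∫ s in (-T)..T, e p s with hg
  have hnormcoef : ∀ T : ℝ, 0 < T → ‖(1 / (2 * (T : ℂ)))‖ = 1 / (2 * T) := by
    intro T hT
    rw [show (1 / (2 * (T : ℂ))) = ((1 / (2 * T) : ℝ) : ℂ) by push_cast; ring]
    rw [Complex.norm_real, Real.norm_of_nonneg (by positivity)]
  have hkey : ∀ T : ℝ, 0 < T → ∑' p, g T p = 0 := by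
    intro T hT
    have hle : (-T : ℝ) ≤ T := by linarith
    have hmeas : ∀ p, AEStronglyMeasurable (e p) (volume.restrict (Set.Ioc (-T) T)) :=
      fun p => (continuous_const.mul
        (Complex.continuous_exp.comp (by continuity))).aestronglyMeasurable
    have hlint : ∑' p, ∫⁻ s in Set.Ioc (-T) T, ‖e p s‖₊ ∂volume ≠ ⊤ := by
      have heq : ∀ p, ∫⁻ s in Set.Ioc (-T) T, (‖e p s‖₊ : ENNReal) ∂volume
          = (‖c p‖₊ : ENNReal) * ENNReal.ofReal (T - -T) := by
        intro p
        have h1 : (fun s => (‖e p s‖₊ : ENNReal)) = fun _ => ((‖c p‖₊ : ENNReal)) := by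
          funext s; rw [hnn]
        rw [h1, setLIntegral_const, Real.volume_Ioc]
      rw [tsum_congr heq, ENNReal.tsum_mul_right]
      refine ENNReal.mul_ne_top ?_ ENNReal.ofReal_ne_top
      rw [ENNReal.tsum_coe_ne_top_iff_summable]
      exact NNReal.summable_coe.1 (by simpa [coe_nnnorm] using hc)
    have hswap : ∫ s in Set.Ioc (-T) T, (∑' p, e p s) ∂volume
        = ∑' p, ∫ s in Set.Ioc (-T) T, e p s ∂volume := integral_tsum hmeas hlint
    have hzero : ∫ s in Set.Ioc (-T) T, (∑' p, e p s) ∂volume = 0 := by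
      have h1 : (fun s => ∑' p, e p s) = fun _ => (0 : ℂ) := funext fun s => h2 s
      rw [h1, integral_zero]
    calc ∑' p, g T p = (1 / (2 * (T:ℂ))) * ∑' p, ∫ s in (-T)..T, e p s := tsum_mul_left
      _ = 0 := by
          rw [tsum_congr (fun p => (intervalIntegral.integral_of_le hle : _)), ← hswap, hzero,
            mul_zero]
  have hbound : ∀ᶠ T in atTop, ∀ p, ‖g T p‖ ≤ ‖c p‖ := by
    filter_upwards [eventually_gt_atTop (0 : ℝ)] with T hT p
    have hIle : ‖∫ s in (-T)..T, e p s‖ ≤ ‖c p‖ * |T - (-T)| :=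
      intervalIntegral.norm_integral_le_of_norm_le_const fun s _ => (hnorm p s).le
    have habs : |T - (-T)| = 2 * T := by rw [abs_of_pos (by linarith)]; ring
    calc ‖g T p‖ = (1 / (2 * T)) * ‖∫ s in (-T)..T, e p s‖ := by
          rw [hg]; rw [norm_mul, hnormcoef T hT]
      _ ≤ (1 / (2 * T)) * (‖c p‖ * (2 * T)) := by
          rw [← habs]; gcongr
      _ = ‖c p‖ := by field_simp
  have hlim : ∀ p, Tendsto (fun T => g T p) atTop (𝓝 (if p = q then c q else 0)) := by
    intro p
    by_cases hp : p = q
    · subst hp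
      simp only [if_pos rfl]
      refine Tendsto.congr' ?_ tendsto_const_nhds
      filter_upwards [eventually_gt_atTop (0 : ℝ)] with T hT
      have h1 : ∀ s : ℝ, e p s = c p := by intro s; rw [he]; simp
      have hTne : (T : ℂ) ≠ 0 := Complex.ofReal_ne_zero.2 hT.ne'
      rw [hg]
      simp only [h1, intervalIntegral.integral_const, sub_neg_eq_add, Complex.real_smul]
      push_cast
      field_simp
      ring
    · simp only [if_neg hp]
      have hΔ : lm p - lm q ≠ 0 := sub_ne_zero.2 fun hh => hp (hinj hh)
      set Δ : ℝ := lm p - lm q with hΔdef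
      have hIΔ : (Complex.I * (Δ : ℂ)) ≠ 0 := by
        simp [Complex.I_ne_zero, Complex.ofReal_ne_zero, hΔ]
      have habs : (0:ℝ) < |Δ| := abs_pos.2 hΔ
      have hb : ∀ᶠ T in atTop, ‖g T p‖ ≤ (‖c p‖ * (2 / |Δ|)) / T := by
        filter_upwards [eventually_gt_atTop (0 : ℝ)] with T hT
        have hint : ∫ s in (-T)..T, e p s
            = c p * ((Complex.exp (Complex.I * (Δ:ℂ) * T) -
                Complex.exp (Complex.I * (Δ:ℂ) * (-T : ℝ))) / (Complex.I * (Δ:ℂ))) := by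
          rw [he]
          simp only [mul_assoc]
          rw [intervalIntegral.integral_const_mul]
          rw [show (fun s : ℝ => Complex.exp (Complex.I * ((Δ:ℂ) * (s:ℂ))))
              = fun s : ℝ => Complex.exp ((Complex.I * (Δ:ℂ)) * (s:ℂ)) by
            funext s; ring_nf]
          rw [integral_exp_mul_complex hIΔ]
          push_cast
          ring_nf
        have hnum : ‖Complex.exp (Complex.I * (Δ:ℂ) * T) -
            Complex.exp (Complex.I * (Δ:ℂ) * (-T : ℝ))‖ ≤ 2 := by
          refine (norm_sub_le _ _).trans ?_
          rw [norm_exp_eq_one (by simp [Complex.mul_re]),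
            norm_exp_eq_one (by simp [Complex.mul_re])]
          norm_num
        have hden : ‖Complex.I * (Δ:ℂ)‖ = |Δ| := by simp
        have hIle : ‖∫ s in (-T)..T, e p s‖ ≤ ‖c p‖ * (2 / |Δ|) := by
          rw [hint, norm_mul, norm_div, hden]
          gcongr
        calc ‖g T p‖ = (1 / (2 * T)) * ‖∫ s in (-T)..T, e p s‖ := by
              rw [hg]; rw [norm_mul, hnormcoef T hT]
          _ ≤ (1 / (2 * T)) * (‖c p‖ * (2 / |Δ|)) := by gcongr
          _ ≤ (1 / T) * (‖c p‖ * (2 / |Δ|)) := by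
              have h1 : 1 / (2 * T) ≤ 1 / T := one_div_le_one_div_of_le hT (by linarith)
              exact mul_le_mul_of_nonneg_right h1
                (mul_nonneg (norm_nonneg (c p)) (div_nonneg two_pos.le (abs_nonneg Δ)))
          _ = (‖c p‖ * (2 / |Δ|)) / T := by ring
      have hlim0 : Tendsto (fun T : ℝ => (‖c p‖ * (2 / |Δ|)) / T) atTop (𝓝 0) :=
        tendsto_const_nhds.div_atTop tendsto_id
      exact squeeze_zero_norm' hb hlim0
  have h1 : Tendsto (fun T => ∑' p, g T p) atTop (𝓝 (∑' p, if p = q then c q else 0)) :=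
    tendsto_tsum_of_dominated_convergence hc hlim hbound
  have h0 : Tendsto (fun T => ∑' p, g T p) atTop (𝓝 0) := by
    refine Tendsto.congr' ?_ tendsto_const_nhds
    filter_upwards [eventually_gt_atTop (0 : ℝ)] with T hT
    exact (hkey T hT).symm
  have huniq := tendsto_nhds_unique h0 h1
  rwa [tsum_ite_eq, eq_comm] at huniq

lemma norm_exp_of_re (z : ℂ) : ‖Complex.exp z‖ = Real.exp z.re := by
  rw [Complex.norm_exp]

lemma re_neg_I_mul (z : ℂ) (x : ℝ) : (-(Complex.I * z * (x : ℂ))).re = z.im * x := by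
  simp [Complex.mul_re]

lemma differentiable_fourierlike {ν : Measure ℝ} [IsFiniteMeasure ν] {R : ℝ} (hR : 0 ≤ R)
    (hν : ∀ᵐ x ∂ν, |x| ≤ R) :
    Differentiable ℂ fun z : ℂ => ∫ x, Complex.exp (-(Complex.I * z * (x : ℂ))) ∂ν := by
  intro z₀
  have key := hasDerivAt_integral_of_dominated_loc_of_deriv_le (μ := ν)
      (F := fun (z : ℂ) (x : ℝ) => Complex.exp (-(Complex.I * z * (x : ℂ))))
      (F' := fun (z : ℂ) (x : ℝ) =>
        (-(Complex.I * (x : ℂ))) * Complex.exp (-(Complex.I * z * (x : ℂ))))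
      (x₀ := z₀) (bound := fun _ => R * Real.exp ((‖z₀‖ + 1) * R)) (s := Metric.ball z₀ 1) (Metric.ball_mem_nhds z₀ one_pos)
      ?_ ?_ ?_ ?_ ?_ ?_
  · exact key.2.differentiableAt
  · exact Eventually.of_forall fun z =>
      (Complex.continuous_exp.comp (by continuity)).aestronglyMeasurable
  · refine integrable_of_bdd (M := Real.exp ((‖z₀‖ + 1) * R))
      (Complex.continuous_exp.comp (by continuity)) ?_
    filter_upwards [hν] with x hx
    rw [norm_exp_of_re, re_neg_I_mul]
    refine Real.exp_le_exp.2 ?_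
    have him : |z₀.im| ≤ ‖z₀‖ := by
      simpa using Complex.abs_im_le_norm z₀
    calc z₀.im * x ≤ |z₀.im * x| := le_abs_self _
      _ = |z₀.im| * |x| := abs_mul _ _
      _ ≤ (‖z₀‖ + 1) * R :=
          mul_le_mul (him.trans (by linarith)) hx (abs_nonneg _) (by positivity)
  · exact (Continuous.mul ((continuous_const.mul Complex.continuous_ofReal).neg)
      (Complex.continuous_exp.comp (by continuity))).aestronglyMeasurable
  · filter_upwards [hν] with x hx z hz
    have hz' : ‖z‖ ≤ ‖z₀‖ + 1 := by
      have := mem_ball_iff_norm.1 hz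
      calc ‖z‖ = ‖z₀ + (z - z₀)‖ := by ring_nf
        _ ≤ ‖z₀‖ + ‖z - z₀‖ := norm_add_le _ _
        _ ≤ ‖z₀‖ + 1 := by linarith
    rw [norm_mul, norm_exp_of_re, re_neg_I_mul]
    have h1 : ‖-(Complex.I * (x : ℂ))‖ = |x| := by simp
    rw [h1]
    have h2 : Real.exp (z.im * x) ≤ Real.exp ((‖z₀‖ + 1) * R) := by
      refine Real.exp_le_exp.2 ?_
      have him : |z.im| ≤ ‖z‖ := by
        simpa using Complex.abs_im_le_norm z
      calc z.im * x ≤ |z.im| * |x| := (le_abs_self _).trans (abs_mul _ _).le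
        _ ≤ (‖z₀‖ + 1) * R :=
            mul_le_mul (him.trans hz') hx (abs_nonneg _) (by positivity)
    exact mul_le_mul hx h2 (Real.exp_nonneg _) hR
  · exact integrable_const _
  · refine ae_of_all _ fun x z _ => ?_
    have hfun : (fun z : ℂ => Complex.exp (-(Complex.I * z * (x:ℂ))))
        = fun z : ℂ => Complex.exp ((-(Complex.I * (x:ℂ))) * z) := by
      funext w; ring_nf
    rw [hfun]
    have h0 : HasDerivAt (fun w : ℂ => (-(Complex.I * (x:ℂ))) * w)
        (-(Complex.I * (x:ℂ))) z := by
      simpa using (hasDerivAt_id z).const_mul (-(Complex.I * (x:ℂ)))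
    have := h0.cexp
    convert this using 1
    show (-(Complex.I * (x:ℂ))) * Complex.exp (-(Complex.I * z * (x:ℂ)))
      = Complex.exp ((-(Complex.I * (x:ℂ))) * z) * (-(Complex.I * (x:ℂ)))
    rw [show -(Complex.I * z * (x:ℂ)) = (-(Complex.I * (x:ℂ))) * z by ring]
    ring
    rfl

lemma cmFourier_eq_zero_all (μ : ComplexMeasure ℝ) {R : ℝ} (hR : 0 ≤ R)
    (h1 : ∀ᵐ x ∂(ComplexMeasure.re μ).toJordanDecomposition.posPart, |x| ≤ R)
    (h2 : ∀ᵐ x ∂(ComplexMeasure.re μ).toJordanDecomposition.negPart, |x| ≤ R)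
    (h3 : ∀ᵐ x ∂(ComplexMeasure.im μ).toJordanDecomposition.posPart, |x| ≤ R)
    (h4 : ∀ᵐ x ∂(ComplexMeasure.im μ).toJordanDecomposition.negPart, |x| ≤ R)
    {lm : ℕ → ℝ} (hinj : Function.Injective lm) {L : ℝ} (hL : Tendsto lm atTop (𝓝 L))
    (hz : ∀ j, cmFourier μ (lm j) = 0) (l : ℝ) : cmFourier μ l = 0 := by
  set F : ℂ → ℂ := fun z =>
    ((∫ x, Complex.exp (-(Complex.I * z * (x:ℂ)))
        ∂(ComplexMeasure.re μ).toJordanDecomposition.posPart) -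
      ∫ x, Complex.exp (-(Complex.I * z * (x:ℂ)))
        ∂(ComplexMeasure.re μ).toJordanDecomposition.negPart) +
    Complex.I • ((∫ x, Complex.exp (-(Complex.I * z * (x:ℂ)))
        ∂(ComplexMeasure.im μ).toJordanDecomposition.posPart) -
      ∫ x, Complex.exp (-(Complex.I * z * (x:ℂ)))
        ∂(ComplexMeasure.im μ).toJordanDecomposition.negPart) with hF
  have hFl : ∀ t : ℝ, F (t : ℂ) = cmFourier μ t := fun t => rfl
  have hdiff : Differentiable ℂ F := by
    refine Differentiable.add (Differentiable.sub ?_ ?_)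
      (Differentiable.fun_const_smul (Differentiable.sub ?_ ?_) _) <;>
      exact differentiable_fourierlike hR (by assumption)
  have han : AnalyticOnNhd ℂ F Set.univ :=
    Complex.analyticOnNhd_univ_iff_differentiable.2 hdiff
  have hne : ∀ᶠ j in atTop, lm j ≠ L := by
    by_cases hex : ∃ j0, lm j0 = L
    · obtain ⟨j0, hj0⟩ := hex
      filter_upwards [eventually_gt_atTop j0] with j hj hl
      exact hj.ne' (hinj (hl.trans hj0.symm))
    · exact Eventually.of_forall fun j hl => hex ⟨j, hl⟩
  have htend : Tendsto (fun j => ((lm j : ℝ) : ℂ)) atTop (𝓝[≠] (L : ℂ)) := by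
    rw [tendsto_nhdsWithin_iff]
    constructor
    · exact (Complex.continuous_ofReal.tendsto L).comp hL
    · filter_upwards [hne] with j hj
      simp only [Set.mem_compl_iff, Set.mem_singleton_iff]
      exact fun hc => hj (Complex.ofReal_injective hc)
  have hfreq : ∃ᶠ z in 𝓝[≠] (L : ℂ), F z = 0 :=
    htend.frequently (Frequently.of_forall fun j => (hFl (lm j)).trans (hz j))
  have hEq := han.eqOn_zero_of_preconnected_of_frequently_eq_zero
    isPreconnected_univ (Set.mem_univ (L : ℂ)) hfreq
  rw [← hFl l]
  exact hEq (Set.mem_univ _)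

/-- Two finite measures concentrated on `[-R, R]` with the same Fourier transform agree. -/
lemma measure_eq_of_fourier {ν ρ : Measure ℝ} [IsFiniteMeasure ν] [IsFiniteMeasure ρ]
    {R : ℝ} (hR : 0 < R) (hν : ∀ᵐ x ∂ν, |x| ≤ R) (hρ : ∀ᵐ x ∂ρ, |x| ≤ R)
    (h : ∀ l : ℝ, ∫ x, Complex.exp (-(Complex.I * (l : ℂ) * (x : ℂ))) ∂ν
        = ∫ x, Complex.exp (-(Complex.I * (l : ℂ) * (x : ℂ))) ∂ρ) : ν = ρ := by
  set T : ℝ := 2 * R + 2 with hTdef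
  have hT : 0 < T := by positivity
  haveI : Fact (0 < T) := ⟨hT⟩
  have hcont_coe : Continuous ((↑) : ℝ → AddCircle T) := continuous_quotient_mk'
  have hPint : ∀ (σ : Measure ℝ) [IsFiniteMeasure σ], ∀ P : C(AddCircle T, ℂ),
      Integrable (fun x : ℝ => P (x : AddCircle T)) σ := by
    intro σ _ P
    refine integrable_of_bdd (M := ‖P‖) (P.continuous.comp hcont_coe) ?_
    exact ae_of_all _ fun x => P.norm_coe_le_norm _
  have hspan : ∀ P : C(AddCircle T, ℂ), P ∈ Submodule.span ℂ (Set.range (@fourier T)) →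
      ∫ x : ℝ, P (x : AddCircle T) ∂ν = ∫ x : ℝ, P (x : AddCircle T) ∂ρ := by
    intro P hP
    induction hP using Submodule.span_induction with
    | mem P hP =>
        obtain ⟨n, rfl⟩ := hP
        have hfe : ∀ x : ℝ, (fourier n) ((x : ℝ) : AddCircle T)
            = Complex.exp (-(Complex.I * ((-(2 * Real.pi * n / T) : ℝ) : ℂ) * (x : ℂ))) := by
          intro x
          rw [fourier_coe_apply]
          congr 1
          push_cast
          field_simp
        simp only [hfe]
        exact h _
    | zero => simp
    | add P Q hP hQ ihP ihQ =>
        simp only [ContinuousMap.add_apply]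
        rw [integral_add (hPint ν P) (hPint ν Q), integral_add (hPint ρ P) (hPint ρ Q), ihP, ihQ]
    | smul a P hP ih =>
        simp only [ContinuousMap.smul_apply, smul_eq_mul]
        rw [integral_const_mul, integral_const_mul, ih]
  have hbc : ∀ (fr : ℝ → ℝ) (M : ℝ), Continuous fr → (∀ x, |fr x| ≤ M) →
      ∫ x, fr x ∂ν = ∫ x, fr x ∂ρ := by
    intro fr M hfr hfrb
    have hfrℂ : ∀ (σ : Measure ℝ) [IsFiniteMeasure σ],
        Integrable (fun x : ℝ => (fr x : ℂ)) σ := by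
      intro σ _
      refine integrable_of_bdd (M := M) (Complex.continuous_ofReal.comp hfr) ?_
      exact ae_of_all _ fun x => by rw [Complex.norm_real, Real.norm_eq_abs]; exact hfrb x
    set A := ∫ x, fr x ∂ν with hA
    set B := ∫ x, fr x ∂ρ with hB
    set Mtot : ℝ := (ν Set.univ).toReal + (ρ Set.univ).toReal with hMtot
    have hMtot0 : 0 ≤ Mtot := by positivity
    have key : ∀ ε : ℝ, 0 < ε → |A - B| ≤ ε * Mtot := by
      intro ε hε
      set χ : ℝ → ℝ := fun x => max 0 (min 1 (T / 2 - |x|)) with hχdef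
      have hχc : Continuous χ :=
        continuous_const.max (continuous_const.min (continuous_const.sub continuous_abs))
      have hχ1 : ∀ x : ℝ, |x| ≤ R → χ x = 1 := by
        intro x hx
        have h1 : (1 : ℝ) ≤ T / 2 - |x| := by rw [hTdef]; linarith
        rw [hχdef]
        simp only
        rw [min_eq_left h1, max_eq_right zero_le_one]
      have hχa : χ (-(T/2)) = 0 := by
        rw [hχdef]
        simp only [abs_neg, abs_of_pos (by positivity : (0:ℝ) < T/2), sub_self]
        norm_num
      have hχb : χ (T/2) = 0 := by
        rw [hχdef]
        simp only [abs_of_pos (by positivity : (0:ℝ) < T/2), sub_self]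
        norm_num
      set g : ℝ → ℝ := fun x => fr x * χ x with hgdef
      have hgc : Continuous g := hfr.mul hχc
      have hgend : g (-(T/2)) = g (-(T/2) + T) := by
        have he : -(T/2) + T = T/2 := by ring
        rw [he, hgdef]
        simp only
        rw [hχa, hχb, mul_zero, mul_zero]
      set G : AddCircle T → ℝ := AddCircle.liftIco T (-(T/2)) g with hGdef
      have hGc : Continuous G := AddCircle.liftIco_continuous hgend hgc.continuousOn
      have hGK : ∀ x : ℝ, |x| ≤ R → G (x : AddCircle T) = fr x := by
        intro x hx
        obtain ⟨hx1, hx2⟩ := abs_le.1 hx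
        have hmem : x ∈ Set.Ico (-(T/2)) (-(T/2) + T) := by
          constructor
          · rw [hTdef]; linarith
          · rw [hTdef]; linarith
        rw [hGdef, AddCircle.liftIco_coe_apply hmem, hgdef]
        simp only
        rw [hχ1 x hx, mul_one]
      set Gc : C(AddCircle T, ℂ) :=
        ⟨fun z => (G z : ℂ), Complex.continuous_ofReal.comp hGc⟩ with hGcdef
      have hGcl : Gc ∈ closure ((Submodule.span ℂ (Set.range (@fourier T)) : Set _)) := by
        have hmem : Gc ∈ (Submodule.span ℂ (Set.range (@fourier T))).topologicalClosure := by
          rw [span_fourier_closure_eq_top]; trivial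
        rwa [← Submodule.topologicalClosure_coe]
      obtain ⟨P, hPmem, hPd⟩ := Metric.mem_closure_iff.1 hGcl ε hε
      have happrox : ∀ x : ℝ, |x| ≤ R → ‖(fr x : ℂ) - P (x : AddCircle T)‖ ≤ ε := by
        intro x hx
        have h1 : dist (Gc (x : AddCircle T)) (P (x : AddCircle T)) ≤ dist Gc P :=
          ContinuousMap.dist_apply_le_dist _
        have h2 : Gc (x : AddCircle T) = (fr x : ℂ) := by
          rw [hGcdef]
          simp only [ContinuousMap.coe_mk]
          rw [hGK x hx]
        rw [dist_eq_norm, h2] at h1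
        exact h1.trans hPd.le
      have hsubν : ‖∫ x, ((fr x : ℂ) - P (x : AddCircle T)) ∂ν‖ ≤ ε * (ν Set.univ).toReal := by
        refine norm_integral_le_of_norm_le_const ?_
        filter_upwards [hν] with x hx
        exact happrox x hx
      have hsubρ : ‖∫ x, ((fr x : ℂ) - P (x : AddCircle T)) ∂ρ‖ ≤ ε * (ρ Set.univ).toReal := by
        refine norm_integral_le_of_norm_le_const ?_
        filter_upwards [hρ] with x hx
        exact happrox x hx
      have hIν : ∫ x, ((fr x : ℂ) - P (x : AddCircle T)) ∂ν
          = ((A : ℝ) : ℂ) - ∫ x : ℝ, P (x : AddCircle T) ∂ν := by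
        rw [integral_sub (hfrℂ ν) (hPint ν P)]
        congr 1
        exact integral_ofReal
      have hIρ : ∫ x, ((fr x : ℂ) - P (x : AddCircle T)) ∂ρ
          = ((B : ℝ) : ℂ) - ∫ x : ℝ, P (x : AddCircle T) ∂ρ := by
        rw [integral_sub (hfrℂ ρ) (hPint ρ P)]
        congr 1
        exact integral_ofReal
      have hdiff : ((A - B : ℝ) : ℂ) = (∫ x, ((fr x : ℂ) - P (x : AddCircle T)) ∂ν)
          - ∫ x, ((fr x : ℂ) - P (x : AddCircle T)) ∂ρ := by
        rw [hIν, hIρ, hspan P hPmem]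
        push_cast
        ring
      calc |A - B| = ‖((A - B : ℝ) : ℂ)‖ := by rw [Complex.norm_real, Real.norm_eq_abs]
        _ ≤ ε * (ν Set.univ).toReal + ε * (ρ Set.univ).toReal := by
            rw [hdiff]
            exact (norm_sub_le _ _).trans (add_le_add hsubν hsubρ)
        _ = ε * Mtot := by rw [hMtot]; ring
    by_contra hAB
    have habs : 0 < |A - B| := abs_pos.2 (sub_ne_zero.2 hAB)
    have hk := key (|A - B| / (2 * (Mtot + 1))) (by positivity)
    have hlt : |A - B| / (2 * (Mtot + 1)) * Mtot < |A - B| := by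
      rw [div_mul_eq_mul_div, div_lt_iff₀ (by positivity)]
      nlinarith
    linarith
  refine ext_of_forall_lintegral_eq_of_IsFiniteMeasure ?_
  intro f
  set fr : ℝ → ℝ := fun x => (f x : ℝ) with hfrdef
  have hfrc : Continuous fr := NNReal.continuous_coe.comp f.continuous
  obtain ⟨C, hC⟩ := f.map_bounded'
  have hM : ∀ x, |fr x| ≤ fr 0 + C := by
    intro x
    have h1 : dist (f x) (f 0) ≤ C := hC x 0
    have h2 : dist (f x) (f 0) = |fr x - fr 0| := NNReal.dist_eq _ _
    rw [h2] at h1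
    have h3 : fr x - fr 0 ≤ |fr x - fr 0| := le_abs_self _
    rw [abs_of_nonneg (NNReal.coe_nonneg _)]
    linarith
  have hint : ∀ (σ : Measure ℝ) [IsFiniteMeasure σ], Integrable fr σ := by
    intro σ _
    exact ⟨hfrc.aestronglyMeasurable, HasFiniteIntegral.of_bounded
      (ae_of_all _ fun x => by rw [Real.norm_eq_abs]; exact hM x)⟩
  rw [lintegral_coe_eq_integral f (hint ν), lintegral_coe_eq_integral f (hint ρ),
    hbc fr (fr 0 + C) hfrc hM]

lemma jordan_parts_null {s : SignedMeasure ℝ} {A : Set ℝ} (hA : MeasurableSet A)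
    (h : ∀ E : Set ℝ, MeasurableSet E → E ⊆ A → s E = 0) :
    s.toJordanDecomposition.posPart A = 0 ∧ s.toJordanDecomposition.negPart A = 0 := by
  obtain ⟨i, hi₁, hi₂, hi₃, hpos, hneg⟩ := s.toJordanDecomposition_spec
  constructor
  · rw [hpos, SignedMeasure.toMeasureOfZeroLE_apply _ hi₂ hi₁ hA]
    simp [h _ (hi₁.inter hA) Set.inter_subset_right]
  · rw [hneg, SignedMeasure.toMeasureOfLEZero_apply _ hi₃ hi₁.compl hA]
    simp [h _ (hi₁.compl.inter hA) Set.inter_subset_right]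

lemma conj_integral_exp (ν : Measure ℝ) (l : ℝ) :
    (starRingEnd ℂ) (∫ x, Complex.exp (-(Complex.I * (l : ℂ) * (x : ℂ))) ∂ν)
      = ∫ x, Complex.exp (-(Complex.I * ((-l : ℝ) : ℂ) * (x : ℂ))) ∂ν := by
  rw [← integral_conj]
  congr 1
  funext x
  rw [← Complex.exp_conj]
  congr 1
  simp only [map_neg, map_mul, Complex.conj_I, Complex.conj_ofReal]
  push_cast
  ring

lemma cm_eq_zero (μ : ComplexMeasure ℝ) {R : ℝ} (hR : 0 < R)
    (h1 : ∀ᵐ x ∂(ComplexMeasure.re μ).toJordanDecomposition.posPart, |x| ≤ R)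
    (h2 : ∀ᵐ x ∂(ComplexMeasure.re μ).toJordanDecomposition.negPart, |x| ≤ R)
    (h3 : ∀ᵐ x ∂(ComplexMeasure.im μ).toJordanDecomposition.posPart, |x| ≤ R)
    (h4 : ∀ᵐ x ∂(ComplexMeasure.im μ).toJordanDecomposition.negPart, |x| ≤ R)
    (hf : ∀ l : ℝ, cmFourier μ l = 0) : μ = 0 := by
  set p1 := (ComplexMeasure.re μ).toJordanDecomposition.posPart
  set n1 := (ComplexMeasure.re μ).toJordanDecomposition.negPart
  set p2 := (ComplexMeasure.im μ).toJordanDecomposition.posPart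
  set n2 := (ComplexMeasure.im μ).toJordanDecomposition.negPart
  set I1 : Measure ℝ → ℝ → ℂ :=
    fun ν l => ∫ x, Complex.exp (-(Complex.I * (l : ℂ) * (x : ℂ))) ∂ν with hI1
  have hfr : ∀ l : ℝ, (I1 p1 l - I1 n1 l) + Complex.I * (I1 p2 l - I1 n2 l) = 0 := by
    intro l
    have := hf l
    rw [cmFourier, cmIntegral] at this
    simpa only [smul_eq_mul] using this
  have hconj : ∀ (ν : Measure ℝ) (l : ℝ), (starRingEnd ℂ) (I1 ν (-l)) = I1 ν l := by
    intro ν l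
    rw [hI1]
    simp only
    rw [conj_integral_exp ν (-l), neg_neg]
  have hsep : ∀ l : ℝ, I1 p1 l = I1 n1 l ∧ I1 p2 l = I1 n2 l := by
    intro l
    have e1 := hfr l
    have e2 := congrArg (starRingEnd ℂ) (hfr (-l))
    simp only [map_add, map_sub, map_mul, Complex.conj_I, map_zero] at e2
    rw [hconj p1 l, hconj n1 l, hconj p2 l, hconj n2 l] at e2
    have h12 : I1 p1 l = I1 n1 l := by linear_combination e1 / 2 + e2 / 2
    refine ⟨h12, ?_⟩
    have hImul : Complex.I * (I1 p2 l - I1 n2 l) = 0 := by linear_combination e1 - h12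
    rcases mul_eq_zero.1 hImul with hI | hsub
    · exact absurd hI Complex.I_ne_zero
    · exact sub_eq_zero.1 hsub
  have hp1n1 : p1 = n1 := measure_eq_of_fourier hR h1 h2 fun l => (hsep l).1
  have hp2n2 : p2 = n2 := measure_eq_of_fourier hR h3 h4 fun l => (hsep l).2
  have hre : ComplexMeasure.re μ = 0 := by
    refine VectorMeasure.ext fun E hE => ?_
    rw [← (ComplexMeasure.re μ).toSignedMeasure_toJordanDecomposition,
      JordanDecomposition.toSignedMeasure, Measure.toSignedMeasure_sub_apply hE,
      show (ComplexMeasure.re μ).toJordanDecomposition.posPart = n1 from hp1n1]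
    exact sub_self _
  have him : ComplexMeasure.im μ = 0 := by
    refine VectorMeasure.ext fun E hE => ?_
    rw [← (ComplexMeasure.im μ).toSignedMeasure_toJordanDecomposition,
      JordanDecomposition.toSignedMeasure, Measure.toSignedMeasure_sub_apply hE,
      show (ComplexMeasure.im μ).toJordanDecomposition.posPart = n2 from hp2n2]
    exact sub_self _
  refine VectorMeasure.ext fun E hE => ?_
  have hreE : (μ E).re = 0 := by
    have := congrArg (fun v : SignedMeasure ℝ => v E) hre
    exact this
  have himE : (μ E).im = 0 := by
    have := congrArg (fun v : SignedMeasure ℝ => v E) him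
    exact this
  rw [VectorMeasure.zero_apply]
  exact Complex.ext (by simpa using hreE) (by simpa using himE)

end CMAux

open CMAux in
/-- Let `μₙ` be complex Borel measures supported in a fixed compact set `K ⊆ ℝ` with
uniformly bounded total variations, let `a n j ≠ 0` with `∑ₙ ∑ⱼ |a n j| < ∞`, and let
`lam n j` be pairwise distinct reals such that `(lam n j)ⱼ` converges for each `n`.
If `∑ₙ ∑ⱼ a n j μ̂ₙ(lam n j) e^{i lam n j s} = 0` for all real `s`, then every `μₙ = 0`. -/
theorem complexMeasures_eq_zero_of_double_exponential_sum_eq_zero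
    (μ : ℕ → ComplexMeasure ℝ) (K : Set ℝ) (hK : IsCompact K)
    (hsupp : ∀ n (s : Set ℝ), MeasurableSet s → s ∩ K = ∅ → μ n s = 0)
    (C : NNReal) (hvar : ∀ n, cmTotalVariation (μ n) ≤ C)
    (a : ℕ → ℕ → ℂ) (lam : ℕ → ℕ → ℝ)
    (ha_ne : ∀ n j, a n j ≠ 0)
    (ha_sum : ∀ n, Summable fun j => ‖a n j‖)
    (hA : Summable fun n => ∑' j, ‖a n j‖)
    (hlam : ∀ n j m i, lam n j = lam m i → n = m ∧ j = i)
    (hconv : ∀ n, ∃ L : ℝ, Tendsto (lam n) atTop (𝓝 L))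
    (hzero : ∀ s : ℝ,
      ∑' n, ∑' j, a n j * cmFourier (μ n) (lam n j) *
        Complex.exp (Complex.I * (lam n j : ℂ) * (s : ℂ)) = 0) :
    ∀ n, μ n = 0 := by
  classical
  -- a bounding radius for K
  obtain ⟨R₀, hR₀⟩ := hK.isBounded.subset_closedBall 0
  set R := max R₀ 1 with hRdef
  have hR : 0 < R := lt_of_lt_of_le one_pos (le_max_right _ _)
  have hKR : ∀ x ∈ K, |x| ≤ R := by
    intro x hx
    have h := hR₀ hx
    rw [Metric.mem_closedBall, Real.dist_eq, sub_zero] at h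
    exact h.trans (le_max_left _ _)
  have hKm : MeasurableSet K := hK.isClosed.measurableSet
  -- concentration of the Jordan parts on K
  have hae : ∀ (σ : Measure ℝ), σ Kᶜ = 0 → ∀ᵐ x ∂σ, |x| ≤ R := by
    intro σ h0
    rw [ae_iff]
    refine measure_mono_null ?_ h0
    intro x hx
    exact fun hxK => hx (hKR x hxK)
  have hconc : ∀ n,
      (∀ᵐ x ∂(ComplexMeasure.re (μ n)).toJordanDecomposition.posPart, |x| ≤ R) ∧
      (∀ᵐ x ∂(ComplexMeasure.re (μ n)).toJordanDecomposition.negPart, |x| ≤ R) ∧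
      (∀ᵐ x ∂(ComplexMeasure.im (μ n)).toJordanDecomposition.posPart, |x| ≤ R) ∧
      (∀ᵐ x ∂(ComplexMeasure.im (μ n)).toJordanDecomposition.negPart, |x| ≤ R) := by
    intro n
    have hzero' : ∀ E : Set ℝ, MeasurableSet E → E ⊆ Kᶜ → μ n E = 0 := by
      intro E hEm hEsub
      refine hsupp n E hEm ?_
      rw [Set.eq_empty_iff_forall_notMem]
      rintro x ⟨h1, h2⟩
      exact hEsub h1 h2
    have hre0 : ∀ E : Set ℝ, MeasurableSet E → E ⊆ Kᶜ → (ComplexMeasure.re (μ n)) E = 0 := by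
      intro E hEm hEsub
      have h0 := hzero' E hEm hEsub
      show (μ n E).re = 0
      simp [ComplexMeasure.re_apply, h0]
    have him0 : ∀ E : Set ℝ, MeasurableSet E → E ⊆ Kᶜ → (ComplexMeasure.im (μ n)) E = 0 := by
      intro E hEm hEsub
      have h0 := hzero' E hEm hEsub
      show (μ n E).im = 0
      simp [ComplexMeasure.im_apply, h0]
    obtain ⟨hr1, hr2⟩ := jordan_parts_null hKm.compl hre0
    obtain ⟨hi1, hi2⟩ := jordan_parts_null hKm.compl him0
    exact ⟨hae _ hr1, hae _ hr2, hae _ hi1, hae _ hi2⟩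
  -- uniform bound on the Fourier transforms
  have hCbound : ∀ n l, ‖cmFourier (μ n) l‖ ≤ (C : ℝ) := by
    intro n l
    refine (norm_cmFourier_le (μ n) l).trans ?_
    calc (cmTotalVariation (μ n)).toReal ≤ ((C : ENNReal)).toReal :=
          ENNReal.toReal_mono (by simp) (hvar n)
      _ = (C : ℝ) := by simp
  -- the flattened coefficients
  set c : ℕ × ℕ → ℂ := fun p => a p.1 p.2 * cmFourier (μ p.1) (lam p.1 p.2) with hc
  set lm : ℕ × ℕ → ℝ := fun p => lam p.1 p.2 with hlm
  have hinj : Function.Injective lm := by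
    intro p r hpr
    obtain ⟨h1, h2⟩ := hlam p.1 p.2 r.1 r.2 hpr
    exact Prod.ext h1 h2
  have hasum : Summable fun p : ℕ × ℕ => ‖a p.1 p.2‖ :=
    (summable_prod_of_nonneg fun p => norm_nonneg _).2 ⟨fun n => ha_sum n, by simpa using hA⟩
  have hcs : Summable fun p => ‖c p‖ := by
    refine Summable.of_nonneg_of_le (fun p => norm_nonneg _) (fun p => ?_)
      (hasum.mul_right (C : ℝ))
    rw [hc]
    simp only
    rw [norm_mul]
    exact mul_le_mul_of_nonneg_left (hCbound _ _) (norm_nonneg _)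
  have hterm_sum : ∀ s : ℝ, Summable fun p : ℕ × ℕ =>
      c p * Complex.exp (Complex.I * (lm p : ℂ) * (s : ℂ)) := by
    intro s
    refine Summable.of_norm ?_
    refine hcs.congr fun p => ?_
    have hh : ‖c p * Complex.exp (Complex.I * (lm p : ℂ) * (s : ℂ))‖ = ‖c p‖ := by
      rw [norm_mul, norm_exp_eq_one (by simp [Complex.mul_re]), mul_one]
    exact hh.symm
  have hflat : ∀ s : ℝ, ∑' p : ℕ × ℕ,
      c p * Complex.exp (Complex.I * (lm p : ℂ) * (s : ℂ)) = 0 := by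
    intro s
    rw [Summable.tsum_prod (hterm_sum s)]
    exact hzero s
  have hcoeff : ∀ q : ℕ × ℕ, c q = 0 := by
    intro q
    refine bohr hinj hcs q ?_
    intro s
    have h0 := hflat s
    have hmul := congrArg
      (fun z => Complex.exp (-(Complex.I * (lm q : ℂ) * (s : ℂ))) * z) h0
    simp only [mul_zero] at hmul
    rw [← tsum_mul_left] at hmul
    rw [← hmul]
    refine tsum_congr fun p => ?_
    rw [show Complex.exp (-(Complex.I * (lm q : ℂ) * (s : ℂ)))
          * (c p * Complex.exp (Complex.I * (lm p : ℂ) * (s : ℂ)))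
        = c p * (Complex.exp (Complex.I * (lm p : ℂ) * (s : ℂ))
          * Complex.exp (-(Complex.I * (lm q : ℂ) * (s : ℂ)))) from by ring,
      ← Complex.exp_add]
    congr 2
    push_cast
    ring
  -- conclude for each n
  intro n
  obtain ⟨L, hL⟩ := hconv n
  have hinj_n : Function.Injective (lam n) := fun j i hji => (hlam n j n i hji).2
  have hzn : ∀ j, cmFourier (μ n) (lam n j) = 0 := by
    intro j
    have hq := hcoeff (n, j)
    rw [hc] at hq
    simp only at hq
    rcases mul_eq_zero.1 hq with h | h
    · exact absurd h (ha_ne n j)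
    · exact h
  obtain ⟨hc1, hc2, hc3, hc4⟩ := hconc n
  have hall : ∀ l, cmFourier (μ n) l = 0 :=
    cmFourier_eq_zero_all (μ n) hR.le hc1 hc2 hc3 hc4 hinj_n hL hzn
  exact cm_eq_zero (μ n) hR hc1 hc2 hc3 hc4 hall
end

section
/- Let B₁ and B₂ be Banach spaces over ℂ and T : B₁ → B₂ a bounded linear operator with dense range. If φ ∈ C(ℝ, B₁) is not mean periodic (i.e., the span of its translates is dense in C(ℝ, B₁)), then T ∘ φ ∈ C(ℝ, B₂) is not mean periodic (i.e., the span of the translates of T ∘ φ is dense in C(ℝ, B₂)). -/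
open Topology

section aux

variable {B₁ B₂ : Type*} [NormedAddCommGroup B₁] [NormedSpace ℂ B₁]
  [NormedAddCommGroup B₂] [NormedSpace ℂ B₂]

/-- Key approximation: any continuous `f : ℝ → B₂` can be approximated on a compact interval
by `T ∘ g` with `g : ℝ → B₁` continuous, when `T` has dense range. -/
lemma key_approx (T : B₁ →L[ℂ] B₂) (hT : DenseRange T) (f : C(ℝ, B₂))
    (n : ℕ) {ε : ℝ} (hε : 0 < ε) :
    ∃ g : C(ℝ, B₁), ∀ s ∈ Set.Icc (-(n : ℝ)) n, ‖T (g s) - f s‖ ≤ ε := by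
  have hK : IsCompact (Set.Icc (-(n : ℝ) - 1) ((n : ℝ) + 1)) := isCompact_Icc
  have huc : UniformContinuousOn f (Set.Icc (-(n : ℝ) - 1) ((n : ℝ) + 1)) :=
    hK.uniformContinuousOn_of_continuous f.continuous.continuousOn
  obtain ⟨δ, hδpos, hδ⟩ := (Metric.uniformContinuousOn_iff).mp huc (ε / 2) (by positivity)
  set d : ℝ := min δ 1 with hd_def
  have hd : 0 < d := lt_min hδpos one_pos
  have hd1 : d ≤ 1 := min_le_right _ _
  have hdδ : d ≤ δ := min_le_left _ _
  have hb : ∀ j : ℤ, ∃ b : B₁, ‖T b - f (j * d)‖ < ε / 2 := by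
    intro j
    obtain ⟨b, hbb⟩ := hT.exists_dist_lt (f (j * d)) (by positivity : (0:ℝ) < ε / 2)
    exact ⟨b, by rwa [dist_eq_norm, norm_sub_rev] at hbb⟩
  choose b hbspec using hb
  set N : ℤ := ⌈(n : ℝ) / d⌉ + 1 with hN_def
  set χ : ℤ → ℝ → ℝ := fun j s => max 0 (1 - |s / d - j|) with hχ_def
  have hχcont : ∀ j : ℤ, Continuous (χ j) := fun j =>
    continuous_const.max
      (continuous_const.sub (((continuous_id.div_const d).sub continuous_const).abs))
  have hχ0 : ∀ j s, 0 ≤ χ j s := fun j s => le_max_left _ _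
  have hχne : ∀ j s, χ j s ≠ 0 → |s - j * d| < d := by
    intro j s h
    have h1 : 0 < 1 - |s / d - j| := by
      by_contra hc
      push_neg at hc
      exact h (max_eq_left hc)
    have h2 : |s / d - j| < 1 := by linarith
    have h3 : |(s - j * d) / d| < 1 := by
      rw [sub_div, mul_div_cancel_right₀ _ hd.ne']
      exact h2
    rwa [abs_div, abs_of_pos hd, div_lt_one hd] at h3
  have hsum : ∀ s : ℝ, |s| ≤ (n : ℝ) →
      ∑ j ∈ Finset.Icc (-N) N, χ j s = 1 := by
    intro s hs
    set x : ℝ := s / d with hx_def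
    have hxabs : |x| ≤ (n : ℝ) / d := by
      rw [hx_def, abs_div, abs_of_pos hd]
      gcongr
    set j₀ : ℤ := ⌊x⌋ with hj₀_def
    have hj₀le : (j₀ : ℝ) ≤ x := Int.floor_le x
    have hxlt : x < j₀ + 1 := Int.lt_floor_add_one x
    have hsub : ({j₀, j₀ + 1} : Finset ℤ) ⊆ Finset.Icc (-N) N := by
      have h1 : -N ≤ j₀ := by
        have ha : -((n : ℝ) / d) ≤ x := (abs_le.mp hxabs).1
        have hb' : (⌊-((n : ℝ) / d)⌋ : ℤ) ≤ j₀ := Int.floor_le_floor ha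
        rw [Int.floor_neg] at hb'
        omega
      have h2 : j₀ + 1 ≤ N := by
        have ha : x ≤ (n : ℝ) / d := (abs_le.mp hxabs).2
        have hb' : j₀ ≤ ⌊(n : ℝ) / d⌋ := Int.floor_le_floor ha
        have hc' : ⌊(n : ℝ) / d⌋ ≤ ⌈(n : ℝ) / d⌉ := Int.floor_le_ceil _
        omega
      intro j hj
      simp only [Finset.mem_insert, Finset.mem_singleton] at hj
      rcases hj with rfl | rfl <;> simp only [Finset.mem_Icc] <;> omega
    have hzero : ∀ j ∈ Finset.Icc (-N) N, j ∉ ({j₀, j₀ + 1} : Finset ℤ) → χ j s = 0 := by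
      intro j _ hj
      simp only [Finset.mem_insert, Finset.mem_singleton, not_or] at hj
      have hcase : j ≤ j₀ - 1 ∨ j₀ + 2 ≤ j := by omega
      have habs : 1 ≤ |x - j| := by
        rcases hcase with hc | hc
        · have : (j : ℝ) ≤ (j₀ : ℝ) - 1 := by exact_mod_cast hc
          have : 1 ≤ x - j := by linarith
          exact this.trans (le_abs_self _)
        · have : (j₀ : ℝ) + 2 ≤ (j : ℝ) := by exact_mod_cast hc
          have h1 : 1 ≤ (j : ℝ) - x := by linarith
          calc (1 : ℝ) ≤ (j : ℝ) - x := h1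
            _ ≤ |(j : ℝ) - x| := le_abs_self _
            _ = |x - j| := abs_sub_comm _ _
      have : χ j s = max 0 (1 - |x - j|) := rfl
      rw [this, max_eq_left (by linarith)]
    rw [← Finset.sum_subset hsub hzero]
    have hne : j₀ ≠ j₀ + 1 := by omega
    rw [Finset.sum_pair hne]
    have e1 : χ j₀ s = 1 - (x - j₀) := by
      have habs : |x - (j₀ : ℝ)| = x - j₀ := abs_of_nonneg (by linarith)
      show max 0 (1 - |x - (j₀ : ℝ)|) = 1 - (x - j₀)
      rw [habs]
      exact max_eq_right (by linarith)
    have e2 : χ (j₀ + 1) s = x - j₀ := by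
      have hcast : ((j₀ + 1 : ℤ) : ℝ) = (j₀ : ℝ) + 1 := by push_cast; ring
      have habs : |x - ((j₀ + 1 : ℤ) : ℝ)| = (j₀ : ℝ) + 1 - x := by
        rw [hcast, abs_sub_comm]
        exact abs_of_nonneg (by linarith)
      show max 0 (1 - |x - ((j₀ + 1 : ℤ) : ℝ)|) = x - j₀
      rw [habs]
      have : 1 - ((j₀ : ℝ) + 1 - x) = x - j₀ := by ring
      rw [this]
      exact max_eq_right (by linarith)
    rw [e1, e2]; ring
  refine ⟨⟨fun s => ∑ j ∈ Finset.Icc (-N) N, χ j s • b j,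
    continuous_finset_sum _ fun j _ => (hχcont j).smul continuous_const⟩, ?_⟩
  intro s hs
  have hs' : |s| ≤ (n : ℝ) := abs_le.mpr ⟨by linarith [hs.1], hs.2⟩
  have hsum1 := hsum s hs'
  simp only [ContinuousMap.coe_mk]
  have hTg : T (∑ j ∈ Finset.Icc (-N) N, χ j s • b j)
      = ∑ j ∈ Finset.Icc (-N) N, χ j s • T (b j) := by
    rw [map_sum]
    exact Finset.sum_congr rfl fun j _ => T.map_smul_of_tower _ _
  have hfs : f s = ∑ j ∈ Finset.Icc (-N) N, χ j s • f s := by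
    rw [← Finset.sum_smul, hsum1, one_smul]
  rw [hTg]
  have hterm : ∀ j ∈ Finset.Icc (-N) N,
      ‖χ j s • (T (b j) - f s)‖ ≤ χ j s * ε := by
    intro j _
    rw [norm_smul, Real.norm_of_nonneg (hχ0 j s)]
    rcases eq_or_ne (χ j s) 0 with h0 | h0
    · simp [h0]
    · have hdist := hχne j s h0
      have hdist' : |(j : ℝ) * d - s| < d := by rwa [abs_sub_comm] at hdist
      have hd_abs := abs_lt.mp hdist'
      have hjd : (j : ℝ) * d ∈ Set.Icc (-(n : ℝ) - 1) ((n : ℝ) + 1) := by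
        have hs1 : -(n : ℝ) ≤ s := hs.1
        have hs2 : s ≤ (n : ℝ) := hs.2
        constructor <;> [linarith [hd_abs.1]; linarith [hd_abs.2]]
      have hsK : s ∈ Set.Icc (-(n : ℝ) - 1) ((n : ℝ) + 1) :=
        ⟨by linarith [hs.1], by linarith [hs.2]⟩
      have h1 : ‖T (b j) - f ((j : ℝ) * d)‖ < ε / 2 := hbspec j
      have h2 : dist (f ((j : ℝ) * d)) (f s) < ε / 2 := by
        apply hδ _ hjd _ hsK
        rw [Real.dist_eq]
        linarith [hdist'.trans_le hdδ]
      have h3 : ‖T (b j) - f s‖ ≤ ‖T (b j) - f ((j : ℝ) * d)‖ + ‖f ((j : ℝ) * d) - f s‖ :=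
        norm_sub_le_norm_sub_add_norm_sub _ _ _
      rw [← dist_eq_norm] at h3
      rw [← dist_eq_norm] at h3
      have h4 : ‖T (b j) - f s‖ ≤ ε := by
        rw [← dist_eq_norm]
        calc dist (T (b j)) (f s) ≤ dist (T (b j)) (f ((j : ℝ) * d)) + dist (f ((j : ℝ) * d)) (f s) :=
              dist_triangle _ _ _
          _ ≤ ε / 2 + ε / 2 := by
              rw [dist_eq_norm]
              exact add_le_add h1.le h2.le
          _ = ε := by ring
      exact mul_le_mul_of_nonneg_left h4 (hχ0 j s)
  calc ‖∑ j ∈ Finset.Icc (-N) N, χ j s • T (b j) - f s‖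
      = ‖∑ j ∈ Finset.Icc (-N) N, χ j s • (T (b j) - f s)‖ := by
        conv_lhs => rw [hfs]
        rw [← Finset.sum_sub_distrib]
        congr 1
        exact Finset.sum_congr rfl fun j _ => (smul_sub _ _ _).symm
    _ ≤ ∑ j ∈ Finset.Icc (-N) N, ‖χ j s • (T (b j) - f s)‖ := norm_sum_le _ _
    _ ≤ ∑ j ∈ Finset.Icc (-N) N, χ j s * ε := Finset.sum_le_sum hterm
    _ = ε := by rw [← Finset.sum_mul, hsum1, one_mul]

end aux

/-- If `T : B₁ → B₂` is a bounded linear operator with dense range and `φ ∈ C(ℝ, B₁)` is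
not mean periodic, then `T ∘ φ ∈ C(ℝ, B₂)` is not mean periodic. -/
theorem not_meanPeriodic_of_denseRange_comp
    (B₁ : Type*) [NormedAddCommGroup B₁] [NormedSpace ℂ B₁] [CompleteSpace B₁]
    (B₂ : Type*) [NormedAddCommGroup B₂] [NormedSpace ℂ B₂] [CompleteSpace B₂]
    (T : B₁ →L[ℂ] B₂) (hT : DenseRange T)
    (φ : C(ℝ, B₁))
    (hφ : Dense (Submodule.span ℂ (Set.range (translateBy φ)) : Set C(ℝ, B₁))) :
    Dense (Submodule.span ℂ
      (Set.range (translateBy (ContinuousMap.comp ⟨T, T.continuous⟩ φ))) :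
        Set C(ℝ, B₂)) := by
  set ψ : C(ℝ, B₂) := ContinuousMap.comp ⟨T, T.continuous⟩ φ with hψ_def
  set S : Submodule ℂ C(ℝ, B₂) := Submodule.span ℂ (Set.range (translateBy ψ)) with hS_def
  set L : C(ℝ, B₁) →ₗ[ℂ] C(ℝ, B₂) := (ContinuousLinearMap.compLeftContinuous ℂ ℝ T).toLinearMap with hL_def
  have hLeq : (L : C(ℝ, B₁) → C(ℝ, B₂))
      = ContinuousMap.comp (⟨T, T.continuous⟩ : C(B₁, B₂)) := by
    funext χ; ext s; rfl
  have hLcont : Continuous L := by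
    rw [hLeq]; exact ContinuousMap.continuous_postcomp _
  -- every `L χ` lies in the closure of `S`
  have hrange : ∀ χ : C(ℝ, B₁), L χ ∈ closure (S : Set C(ℝ, B₂)) := by
    intro χ
    have h1 : χ ∈ closure (Submodule.span ℂ (Set.range (translateBy φ)) : Set C(ℝ, B₁)) := by
      rw [hφ.closure_eq]; trivial
    have hmap : Submodule.map L (Submodule.span ℂ (Set.range (translateBy φ))) ≤ S := by
      rw [Submodule.map_span, Submodule.span_le]
      rintro _ ⟨_, ⟨t, rfl⟩, rfl⟩
      refine Submodule.subset_span ⟨t, ?_⟩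
      ext s; rfl
    have h2 : L '' ((Submodule.span ℂ (Set.range (translateBy φ)) : Submodule ℂ _) : Set _)
        ⊆ (S : Set C(ℝ, B₂)) := by
      rintro _ ⟨x, hx, rfl⟩
      exact hmap ⟨x, hx, rfl⟩
    have h3 : L χ ∈ L '' closure
        ((Submodule.span ℂ (Set.range (translateBy φ)) : Submodule ℂ _) : Set _) :=
      Set.mem_image_of_mem _ h1
    have h4 := image_closure_subset_closure_image hLcont h3
    exact closure_mono h2 h4
  -- density via the approximation lemma
  intro f
  choose g hg using fun m : ℕ =>
    key_approx T hT f m (show (0 : ℝ) < 1 / (m + 1) by positivity)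
  have htend : Filter.Tendsto (fun m => L (g m)) Filter.atTop (𝓝 f) := by
    rw [ContinuousMap.tendsto_iff_forall_isCompact_tendstoUniformlyOn]
    intro K hK
    obtain ⟨r, hr⟩ := hK.isBounded.subset_closedBall 0
    obtain ⟨m₀, hm₀⟩ := exists_nat_ge r
    rw [Metric.tendstoUniformlyOn_iff]
    intro ε hε
    obtain ⟨m₁, hm₁⟩ := exists_nat_gt (1 / ε)
    filter_upwards [Filter.eventually_ge_atTop (max m₀ m₁)] with m hm
    intro x hx
    have hmm₀ : m₀ ≤ m := (le_max_left _ _).trans hm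
    have hmm₁ : m₁ ≤ m := (le_max_right _ _).trans hm
    have hxI : x ∈ Set.Icc (-(m : ℝ)) m := by
      have hx' := hr hx
      rw [Real.closedBall_eq_Icc] at hx'
      have hrm : r ≤ (m : ℝ) := hm₀.trans (by exact_mod_cast hmm₀)
      exact ⟨by linarith [hx'.1], by linarith [hx'.2]⟩
    have hb := hg m x hxI
    have hlt : 1 / ((m : ℝ) + 1) < ε := by
      have h1 : 1 / ε < (m : ℝ) + 1 := by
        have : (m₁ : ℝ) ≤ m := by exact_mod_cast hmm₁
        linarith
      rw [div_lt_iff₀ (by positivity : (0 : ℝ) < (m : ℝ) + 1)]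
      have := (div_lt_iff₀ hε).mp h1
      nlinarith
    have hLval : (L (g m)) x = T (g m x) := rfl
    rw [dist_eq_norm, hLval, norm_sub_rev]
    exact lt_of_le_of_lt hb hlt
  have hmem := mem_closure_of_tendsto htend
    (Filter.Eventually.of_forall fun m => hrange (g m))
  rwa [closure_closure] at hmem
end

section
/- Let B be a separable Banach space over ℂ and let (hₙ) be a sequence in B with ‖hₙ‖ = 1 for all n whose linear span is dense in B. Let (fₙ) be continuous functions ℝ → ℂ with |fₙ(s)| ≤ a(n) for all s, where Σₙ a(n) < ∞, and define ψ(s) = Σₙ fₙ(s) hₙ and φ(s) = Σₙ fₙ(s) eₙ ∈ ℓ¹(ℕ, ℂ). If g ∈ C(ℝ) is such that g·e₁ lies in τ(φ) ⊆ C(ℝ, ℓ¹(ℕ, ℂ)), then g·h₁ lies in τ(ψ) ⊆ C(ℝ, B). -/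
open Topology

/-! The map `eₙ ↦ hₙ` extends to a continuous linear map `T : ℓ¹ → B` with `T ∘ φ = ψ` and
`T ∘ (g·e₀) = g·h₀`. Post-composition with `T` is continuous on `C(ℝ, ℓ¹)`, linear, and commutes
with translations, so it maps `τ(φ)` into `τ(ψ)`. -/

namespace lp

variable {ι 𝕜 E : Type*} [NontriviallyNormedField 𝕜] [NormedAddCommGroup E] [NormedSpace 𝕜 E]
  [CompleteSpace E]

noncomputable def linearCombinationCLM (v : ι → E) {K : ℝ} (hK : 0 ≤ K) (hv : ∀ i, ‖v i‖ ≤ K) :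
    ℓ¹(ι, 𝕜) →L[𝕜] E :=
  (tsumCLM 𝕜 ι E).comp
    (mapCLM 1 (fun i => ContinuousLinearMap.toSpanSingleton 𝕜 (v i)) hK (by simpa using hv))

lemma linearCombinationCLM_apply (v : ι → E) {K : ℝ} (hK : 0 ≤ K) (hv : ∀ i, ‖v i‖ ≤ K)
    (x : ℓ¹(ι, 𝕜)) : linearCombinationCLM v hK hv x = ∑' i, x i • v i :=
  rfl

lemma linearCombinationCLM_single [DecidableEq ι] (v : ι → E) {K : ℝ} (hK : 0 ≤ K)
    (hv : ∀ i, ‖v i‖ ≤ K) (i : ι) (c : 𝕜) :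
    linearCombinationCLM v hK hv (lp.single 1 i c) = c • v i := by
  rw [linearCombinationCLM_apply, tsum_eq_single i fun j hj => by simp [hj]]
  simp

end lp

lemma ContinuousLinearMap.compLeftContinuous_apply_apply {R M M₂ α : Type*} [TopologicalSpace M]
    [TopologicalSpace M₂] [TopologicalSpace α] [Semiring R] [AddCommMonoid M] [AddCommMonoid M₂]
    [ContinuousAdd M] [Module R M] [ContinuousConstSMul R M] [ContinuousAdd M₂] [Module R M₂]
    [ContinuousConstSMul R M₂] (g : M →L[R] M₂) (u : C(α, M)) (a : α) :
    g.compLeftContinuous R α u a = g (u a) :=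
  rfl

section tau

variable {E F : Type*} [NormedAddCommGroup E] [NormedSpace ℂ E] [NormedAddCommGroup F]
  [NormedSpace ℂ F]

lemma translateBy_compLeftContinuous (T : E →L[ℂ] F) (φ : C(ℝ, E)) (t : ℝ) :
    translateBy (T.compLeftContinuous ℂ ℝ φ) t = T.compLeftContinuous ℂ ℝ (translateBy φ t) :=
  rfl

lemma compLeftContinuous_mem_tau (T : E →L[ℂ] F) {φ u : C(ℝ, E)} (hu : u ∈ tau φ) :
    T.compLeftContinuous ℂ ℝ u ∈ tau (T.compLeftContinuous ℂ ℝ φ) := by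
  set P := T.compLeftContinuous ℂ ℝ
  have hrange : P '' Set.range (translateBy φ) = Set.range (translateBy (P φ)) := by
    rw [← Set.range_comp]
    exact congrArg Set.range (funext fun t => (translateBy_compLeftContinuous T φ t).symm)
  have hspan : P '' (Submodule.span ℂ (Set.range (translateBy φ)) : Set C(ℝ, E)) ⊆
      Submodule.span ℂ (Set.range (translateBy (P φ))) :=
    hrange ▸ Submodule.image_span_subset_span (P : C(ℝ, E) →ₗ[ℂ] C(ℝ, F)) _
  exact map_mem_closure P.continuous hu fun w hw => hspan (Set.mem_image_of_mem P hw)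

end tau

theorem smul_mem_tau_of_smul_single_mem_tau
    (B : Type*) [NormedAddCommGroup B] [NormedSpace ℂ B] [CompleteSpace B]
    (h : ℕ → B) (hh : ∀ n, ‖h n‖ = 1)
    (f : ℕ → ℝ → ℂ)
    (ψ : C(ℝ, B)) (hψ : ∀ s : ℝ, ψ s = ∑' n, f n s • h n)
    (φ : C(ℝ, lp (fun _ : ℕ => ℂ) 1)) (hφ : ∀ (s : ℝ) (n : ℕ), φ s n = f n s)
    (g : C(ℝ, ℂ))
    (G : C(ℝ, lp (fun _ : ℕ => ℂ) 1)) (hG : ∀ s : ℝ, G s = lp.single 1 0 (g s))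
    (hGmem : G ∈ tau φ) :
    (⟨fun s => g s • h 0, by continuity⟩ : C(ℝ, B)) ∈ tau ψ := by
  let T := lp.linearCombinationCLM (𝕜 := ℂ) h zero_le_one fun n => (hh n).le
  have hTφ : T.compLeftContinuous ℂ ℝ φ = ψ := by
    ext s
    simp only [ContinuousLinearMap.compLeftContinuous_apply_apply, T,
      lp.linearCombinationCLM_apply, hφ, hψ]
  have hTG : T.compLeftContinuous ℂ ℝ G = ⟨fun s => g s • h 0, by continuity⟩ := by
    ext s
    simp only [ContinuousLinearMap.compLeftContinuous_apply_apply, T, hG,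
      lp.linearCombinationCLM_single, ContinuousMap.coe_mk]
  exact hTG ▸ hTφ ▸ compLeftContinuous_mem_tau T hGmem
end
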